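/- arXiv:2603.01186 — 8 statements merged into one kernel-verified Lean document; each statement's English description precedes it below -/
import Mathlib

section
/- Let A be a real n×n Metzler matrix (all off-diagonal entries nonnegative). Then the spectral abscissa of A is attained at a real eigenvalue: there exists a real number λ₀ which is an eigenvalue of A such that Re(μ) ≤ λ₀ for every complex eigenvalue μ of A. In particular, a Metzler matrix can never have its dominant eigenvalue form a non-real complex conjugate pair. -/
open Matrix Polynomial

noncomputable section

/-- `μ : ℂ` is an eigenvalue of the real matrix `A`, i.e. a complex root of its
characteristic polynomial. -/
def Matrix.IsEigenvalueR {n : ℕ} (A : Matrix (Fin n) (Fin n) ℝ) (μ : ℂ) : Prop :=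
  ((A.map (Complex.ofReal)).charpoly).IsRoot μ

namespace MetzlerAux

lemma charpoly_eval {n : ℕ} {R : Type*} [CommRing R] (M : Matrix (Fin n) (Fin n) R) (x : R) :
    M.charpoly.eval x = (x • (1 : Matrix (Fin n) (Fin n) R) - M).det := by
  rw [Matrix.charpoly, ← Polynomial.coe_evalRingHom, RingHom.map_det]
  congr 1
  ext i j
  by_cases h : i = j
  · subst h; simp [Matrix.charmatrix_apply_eq, Matrix.one_apply]
  · simp [Matrix.charmatrix_apply_ne _ _ _ h, Matrix.one_apply, h]


lemma feas_of_eigen {n : ℕ} (A : Matrix (Fin n) (Fin n) ℝ)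
    (hMetzler : ∀ i j, i ≠ j → 0 ≤ A i j) (μ : ℂ)
    (h : (μ • (1 : Matrix (Fin n) (Fin n) ℂ) - A.map Complex.ofReal).det = 0) :
    ∃ w : Fin n → ℝ, (∀ i, 0 ≤ w i) ∧ (∑ i, w i = 1) ∧
      ∀ i, μ.re * w i ≤ A.mulVec w i := by
  obtain ⟨v, hv, hmv⟩ := Matrix.exists_mulVec_eq_zero_iff.2 h
  have hev : ∀ i, (A.map Complex.ofReal).mulVec v i = μ * v i := by
    intro i
    have := congr_fun hmv i
    simp [Matrix.sub_mulVec, Matrix.smul_mulVec, Matrix.one_mulVec, sub_eq_zero] at this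
    simpa using this.symm
  set c : ℝ := |μ.re| + ∑ j, |A j j| with hc
  have hcA : ∀ i, 0 ≤ A i i + c := by
    intro i
    have h1 : |A i i| ≤ ∑ j, |A j j| :=
      Finset.single_le_sum (f := fun j => |A j j|) (fun j _ => abs_nonneg _) (Finset.mem_univ i)
    have := neg_abs_le (A i i)
    have h0 : (0:ℝ) ≤ |μ.re| := abs_nonneg _
    nlinarith [abs_nonneg (A i i)]
  have key : ∀ i, μ.re * ‖v i‖ ≤ ∑ j, A i j * ‖v j‖ := by
    intro i
    have hsum : (μ + c) * v i = ∑ j, ((A i j + if i = j then c else 0 : ℝ) : ℂ) * v j := by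
      have := hev i
      simp only [Matrix.mulVec, dotProduct, Matrix.map_apply] at this
      have h4 : ∑ x, ((if i = x then c else 0 : ℝ) : ℂ) * v x = (c:ℂ) * v i := by
        simp [apply_ite (fun r : ℝ => (r:ℂ)), ite_mul, Finset.sum_ite_eq]
      push_cast
      simp only [add_mul, Finset.sum_add_distrib, this]
      rw [h4]
    have h1 : (μ.re + c) * ‖v i‖ ≤ ‖(μ + c) * v i‖ := by
      rw [norm_mul]
      have : μ.re + c ≤ ‖μ + (c:ℂ)‖ := by
        have := Complex.re_le_norm (μ + c)
        simpa [Complex.add_re] using this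
      exact mul_le_mul_of_nonneg_right this (norm_nonneg _) |>.trans_eq rfl |>.trans (le_of_eq rfl)
    have h2 : ‖(μ + c) * v i‖ ≤ ∑ j, (A i j + if i = j then c else 0) * ‖v j‖ := by
      rw [hsum]
      refine (norm_sum_le _ _).trans ?_
      refine Finset.sum_le_sum fun j _ => ?_
      rw [norm_mul, Complex.norm_real]
      have hnn : 0 ≤ A i j + if i = j then c else 0 := by
        by_cases hij : i = j
        · subst hij; simpa using hcA i
        · simpa [hij] using hMetzler i j hij
      rw [Real.norm_eq_abs, abs_of_nonneg hnn]
    have h3 : ∑ j, (A i j + if i = j then c else 0) * ‖v j‖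
        = (∑ j, A i j * ‖v j‖) + c * ‖v i‖ := by
      simp only [add_mul, Finset.sum_add_distrib, ite_mul, zero_mul,
        Finset.sum_ite_eq, Finset.mem_univ, if_pos]
    nlinarith [h1.trans (h2.trans_eq h3)]
  -- normalize
  set s : ℝ := ∑ j, ‖v j‖ with hs
  have hspos : 0 < s := by
    rcases Function.ne_iff.1 hv with ⟨i, hi⟩
    exact Finset.sum_pos' (fun j _ => norm_nonneg _)
      ⟨i, Finset.mem_univ i, norm_pos_iff.2 hi⟩
  refine ⟨fun i => s⁻¹ * ‖v i‖, fun i => by positivity, ?_, ?_⟩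
  · rw [← Finset.mul_sum, inv_mul_cancel₀ hspos.ne']
  · intro i
    have := key i
    have hAs : A.mulVec (fun i => s⁻¹ * ‖v i‖) i = s⁻¹ * ∑ j, A i j * ‖v j‖ := by
      simp [Matrix.mulVec, dotProduct, Finset.mul_sum]; ring_nf
      exact Finset.sum_congr rfl fun j _ => by ring
    rw [hAs]
    have hsi : 0 ≤ s⁻¹ := by positivity
    nlinarith

lemma perron_strict {n : ℕ} (hn : 0 < n) (M : Matrix (Fin n) (Fin n) ℝ)
    (hpos : ∀ i j, i ≠ j → 0 < M i j) :
    ∃ lam : ℝ, ((lam • (1 : Matrix (Fin n) (Fin n) ℝ) - M).det = 0) ∧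
      (∃ w : Fin n → ℝ, (∀ i, 0 ≤ w i) ∧ (∑ i, w i = 1) ∧
        ∀ i, lam * w i ≤ ∑ j, M i j * w j) ∧
      ∀ t : ℝ, ∀ w : Fin n → ℝ, (∀ i, 0 ≤ w i) → (∑ i, w i = 1) →
        (∀ i, t * w i ≤ ∑ j, M i j * w j) → t ≤ lam := by
  haveI : Nonempty (Fin n) := ⟨⟨0, hn⟩⟩
  set S : ℝ := ∑ i, ∑ j, |M i j| with hS
  have hS0 : 0 ≤ S := Finset.sum_nonneg fun i _ => Finset.sum_nonneg fun j _ => abs_nonneg _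
  have hrow : ∀ i, ∑ j, |M i j| ≤ S :=
    fun i => Finset.single_le_sum (f := fun i => ∑ j, |M i j|)
      (fun i _ => Finset.sum_nonneg fun j _ => abs_nonneg _) (Finset.mem_univ i)
  set t₀ : ℝ := -S with ht₀
  set F : Set (ℝ × (Fin n → ℝ)) :=
    {p | t₀ ≤ p.1 ∧ (∀ i, 0 ≤ p.2 i) ∧ (∑ i, p.2 i = 1) ∧
      ∀ i, p.1 * p.2 i ≤ ∑ j, M i j * p.2 j} with hF
  -- F is nonempty
  have hne : F.Nonempty := by
    refine ⟨(t₀, fun _ => (n : ℝ)⁻¹), le_refl _, fun i => by positivity, ?_, ?_⟩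
    · simp [Finset.card_univ]
      field_simp
    · intro i
      have h1 : -(∑ j, |M i j|) ≤ ∑ j, M i j := by
        rw [← Finset.sum_neg_distrib]
        exact Finset.sum_le_sum fun j _ => neg_abs_le _
      have h2 : t₀ ≤ ∑ j, M i j := le_trans (by simpa [ht₀] using neg_le_neg (hrow i)) h1
      have hn' : (0:ℝ) ≤ (n:ℝ)⁻¹ := by positivity
      calc t₀ * (n:ℝ)⁻¹ ≤ (∑ j, M i j) * (n:ℝ)⁻¹ := mul_le_mul_of_nonneg_right h2 hn'
        _ = ∑ j, M i j * (n:ℝ)⁻¹ := by rw [Finset.sum_mul]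
  -- F is closed
  have hclosed : IsClosed F := by
    have c1 : IsClosed {p : ℝ × (Fin n → ℝ) | t₀ ≤ p.1} :=
      isClosed_le continuous_const continuous_fst
    have c2 : IsClosed {p : ℝ × (Fin n → ℝ) | ∀ i, 0 ≤ p.2 i} := by
      rw [Set.setOf_forall]
      exact isClosed_iInter fun i =>
        isClosed_le continuous_const ((continuous_apply i).comp continuous_snd)
    have c3 : IsClosed {p : ℝ × (Fin n → ℝ) | ∑ i, p.2 i = 1} :=
      isClosed_eq (continuous_finset_sum _ fun i _ => (continuous_apply i).comp continuous_snd) continuous_const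
    have c4 : IsClosed {p : ℝ × (Fin n → ℝ) | ∀ i, p.1 * p.2 i ≤ ∑ j, M i j * p.2 j} := by
      rw [Set.setOf_forall]
      refine isClosed_iInter fun i => isClosed_le ?_ ?_
      · exact continuous_fst.mul ((continuous_apply i).comp continuous_snd)
      · exact continuous_finset_sum _ fun j _ =>
          continuous_const.mul ((continuous_apply j).comp continuous_snd)
    have : F = {p | t₀ ≤ p.1} ∩ ({p | ∀ i, 0 ≤ p.2 i} ∩
        ({p : ℝ × (Fin n → ℝ) | ∑ i, p.2 i = 1} ∩
         {p | ∀ i, p.1 * p.2 i ≤ ∑ j, M i j * p.2 j})) := by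
      ext p; simp [hF, Set.mem_setOf_eq, and_assoc]
    rw [this]
    exact c1.inter (c2.inter (c3.inter c4))
  -- F is contained in a compact box
  have hsub : F ⊆ Set.Icc t₀ (max 0 ((n:ℝ) * S)) ×ˢ Set.Icc (0 : Fin n → ℝ) 1 := by
    rintro ⟨t, w⟩ ⟨h1, h2, h3, h4⟩
    have hw1 : ∀ i, w i ≤ 1 := by
      intro i
      calc w i ≤ ∑ j, w j := Finset.single_le_sum (fun j _ => h2 j) (Finset.mem_univ i)
        _ = 1 := h3
    refine ⟨⟨h1, ?_⟩, fun i => h2 i, fun i => hw1 i⟩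
    rcases le_or_gt t 0 with ht | ht
    · exact le_trans ht (le_max_left _ _)
    · -- pick i with 1/n ≤ w i
      obtain ⟨i, hi⟩ : ∃ i, (n:ℝ)⁻¹ ≤ w i := by
        by_contra hcon
        push_neg at hcon
        have : (1:ℝ) < 1 := by
          calc (1:ℝ) = ∑ i, w i := h3.symm
            _ < ∑ _i : Fin n, (n:ℝ)⁻¹ := Finset.sum_lt_sum_of_nonempty
                (Finset.univ_nonempty) (fun i _ => hcon i)
            _ = 1 := by simp [Finset.card_univ]; field_simp
        exact lt_irrefl _ this
      have hb : ∑ j, M i j * w j ≤ S := by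
        calc ∑ j, M i j * w j ≤ ∑ j, |M i j| := by
              refine Finset.sum_le_sum fun j _ => ?_
              calc M i j * w j ≤ |M i j * w j| := le_abs_self _
                _ = |M i j| * |w j| := abs_mul _ _
                _ ≤ |M i j| * 1 := by
                    refine mul_le_mul_of_nonneg_left ?_ (abs_nonneg _)
                    rw [abs_of_nonneg (h2 j)]; exact hw1 j
                _ = |M i j| := mul_one _
          _ ≤ S := hrow i
      have : t * (n:ℝ)⁻¹ ≤ S := le_trans (mul_le_mul_of_nonneg_left hi ht.le) (le_trans (h4 i) hb)
      have hn' : (0:ℝ) < (n:ℝ) := by exact_mod_cast hn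
      have hfin : t ≤ (n:ℝ) * S := by
        have h5 := mul_le_mul_of_nonneg_right this hn'.le
        calc t = t * (n:ℝ)⁻¹ * n := by field_simp
          _ ≤ S * n := h5
          _ = (n:ℝ) * S := mul_comm _ _
      exact le_trans hfin (le_max_right _ _)
  have hcomp : IsCompact F :=
    ((isCompact_Icc).prod isCompact_Icc).of_isClosed_subset hclosed hsub
  -- maximize t over F
  obtain ⟨⟨lam, w⟩, hmemF, hmax⟩ :=
    hcomp.exists_isMaxOn hne (continuous_fst.continuousOn)
  obtain ⟨hlam0, hw0, hwsum, hwfeas⟩ := hmemF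
  have hdom : ∀ t : ℝ, ∀ w' : Fin n → ℝ, (∀ i, 0 ≤ w' i) → (∑ i, w' i = 1) →
      (∀ i, t * w' i ≤ ∑ j, M i j * w' j) → t ≤ lam := by
    intro t w' h1 h2 h3
    rcases le_or_gt t t₀ with ht | ht
    · exact le_trans ht hlam0
    · exact hmax (⟨ht.le, h1, h2, h3⟩ : (t, w') ∈ F)
  refine ⟨lam, ?_, ⟨w, hw0, hwsum, hwfeas⟩, hdom⟩
  -- show lam is an eigenvalue
  set y : Fin n → ℝ := fun i => (∑ j, M i j * w j) - lam * w i with hy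
  have hy0 : ∀ i, 0 ≤ y i := fun i => sub_nonneg.2 (hwfeas i)
  by_cases hyz : y = 0
  · -- eigenvector found
    have hmw : (lam • (1 : Matrix (Fin n) (Fin n) ℝ) - M).mulVec w = 0 := by
      funext i
      have hyi : y i = 0 := by rw [hyz]; rfl
      simp only [hy] at hyi
      have e1 : ((lam • (1 : Matrix (Fin n) (Fin n) ℝ) - M).mulVec w) i
          = lam * w i - ∑ j, M i j * w j := by
        simp [Matrix.sub_mulVec, Matrix.smul_mulVec, Matrix.one_mulVec,
          Matrix.mulVec, dotProduct, Matrix.one_apply, sub_mul,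
          Finset.sum_sub_distrib, mul_ite, mul_one, mul_zero, ite_mul, zero_mul,
          Finset.sum_ite_eq, Finset.sum_ite_eq']
      rw [e1]
      show _ = (0 : Fin n → ℝ) i
      simp only [Pi.zero_apply]
      linarith [hyi]
    refine Matrix.exists_mulVec_eq_zero_iff.1 ⟨w, ?_, hmw⟩
    intro hw
    rw [hw] at hwsum
    simp at hwsum
  · exfalso
    obtain ⟨i₀, hi₀⟩ : ∃ i, 0 < y i := by
      rcases Function.ne_iff.1 hyz with ⟨i, hi⟩
      exact ⟨i, lt_of_le_of_ne (hy0 i) (Ne.symm (by simpa using hi))⟩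
    set c : ℝ := 1 + ∑ i, |M i i| with hc
    set B : Fin n → Fin n → ℝ := fun i j => M i j + if i = j then c else 0 with hB
    have hBpos : ∀ i j, 0 < B i j := by
      intro i j
      by_cases hij : i = j
      · subst hij
        have : |M i i| ≤ ∑ k, |M k k| :=
          Finset.single_le_sum (f := fun k => |M k k|) (fun k _ => abs_nonneg _)
            (Finset.mem_univ i)
        have := neg_abs_le (M i i)
        simp only [hB, eq_self_iff_true, if_true]
        nlinarith
      · simpa [hB, hij] using hpos i j hij
    set u : Fin n → ℝ := fun i => ∑ j, B i j * w j with hu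
    set z : Fin n → ℝ := fun i => ∑ j, B i j * y j with hz
    obtain ⟨j₀, hj₀⟩ : ∃ j, 0 < w j := by
      by_contra hcon
      push_neg at hcon
      have : ∑ i, w i = 0 := le_antisymm (Finset.sum_nonpos fun i _ => hcon i)
        (Finset.sum_nonneg fun i _ => hw0 i)
      rw [hwsum] at this; norm_num at this
    have hupos : ∀ i, 0 < u i := by
      intro i
      have : B i j₀ * w j₀ ≤ u i :=
        Finset.single_le_sum (f := fun j => B i j * w j)
          (fun j _ => mul_nonneg (hBpos i j).le (hw0 j)) (Finset.mem_univ j₀)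
      exact lt_of_lt_of_le (mul_pos (hBpos i j₀) hj₀) this
    have hzpos : ∀ i, 0 < z i := by
      intro i
      have : B i i₀ * y i₀ ≤ z i :=
        Finset.single_le_sum (f := fun j => B i j * y j)
          (fun j _ => mul_nonneg (hBpos i j).le (hy0 j)) (Finset.mem_univ i₀)
      exact lt_of_lt_of_le (mul_pos (hBpos i i₀) hi₀) this
    -- u = (lam + c) • w + y pointwise
    have huw : ∀ j, u j = (lam + c) * w j + y j := by
      intro j
      simp only [hu, hB, hy]
      have e2 : ∑ x, (M j x + if j = x then c else 0) * w x
          = (∑ x, M j x * w x) + c * w j := by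
        simp only [add_mul, Finset.sum_add_distrib, ite_mul, zero_mul,
          Finset.sum_ite_eq, Finset.mem_univ, if_pos]
      rw [e2]; ring
    -- key: ∑ j, B i j * u j = (lam + c) * u i + z i
    have hkey : ∀ i, ∑ j, B i j * u j = (lam + c) * u i + z i := by
      intro i
      have : ∀ j, B i j * u j = (lam + c) * (B i j * w j) + B i j * y j := by
        intro j; rw [huw j]; ring
      rw [Finset.sum_congr rfl fun j _ => this j, Finset.sum_add_distrib,
        ← Finset.mul_sum]
    set δ : ℝ := Finset.univ.inf' (Finset.univ_nonempty) (fun i => z i / u i) with hδ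
    have hδpos : 0 < δ := by
      rw [hδ, Finset.lt_inf'_iff]
      exact fun i _ => div_pos (hzpos i) (hupos i)
    have hδle : ∀ i, δ * u i ≤ z i := by
      intro i
      have : δ ≤ z i / u i := Finset.inf'_le _ (Finset.mem_univ i)
      rw [le_div_iff₀ (hupos i)] at this
      linarith
    -- ∑ j, M i j * u j ≥ (lam + δ) * u i
    have hMu : ∀ i, (lam + δ) * u i ≤ ∑ j, M i j * u j := by
      intro i
      have h1 : ∑ j, B i j * u j = (∑ j, M i j * u j) + c * u i := by
        simp only [hB, add_mul, Finset.sum_add_distrib, ite_mul, zero_mul,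
          Finset.sum_ite_eq, Finset.mem_univ, if_pos]
      have := hkey i
      have := hδle i
      nlinarith
    -- normalize u and contradict maximality
    set su : ℝ := ∑ i, u i with hsu
    have hsupos : 0 < su := Finset.sum_pos (fun i _ => hupos i) Finset.univ_nonempty
    have := hdom (lam + δ) (fun i => su⁻¹ * u i) (fun i => mul_nonneg (inv_nonneg.2 hsupos.le) (hupos i).le)
      (by rw [← Finset.mul_sum, inv_mul_cancel₀ hsupos.ne'])
      (by
        intro i
        have h2 := hMu i
        have hsi : (0:ℝ) ≤ su⁻¹ := by positivity
        calc (lam + δ) * (su⁻¹ * u i) = su⁻¹ * ((lam + δ) * u i) := by ring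
          _ ≤ su⁻¹ * ∑ j, M i j * u j := mul_le_mul_of_nonneg_left h2 hsi
          _ = ∑ j, M i j * (su⁻¹ * u j) := by
              rw [Finset.mul_sum]
              exact Finset.sum_congr rfl fun j _ => by ring)
    linarith

end MetzlerAux

/-- A Metzler matrix (all off-diagonal entries nonnegative) has its spectral abscissa
attained at a real eigenvalue: there is a real eigenvalue `λ₀` dominating the real part
of every complex eigenvalue. -/
theorem metzler_spectral_abscissa_real (n : ℕ) (hn : 0 < n)
    (A : Matrix (Fin n) (Fin n) ℝ)
    (hMetzler : ∀ i j, i ≠ j → 0 ≤ A i j) :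
    ∃ lam0 : ℝ, A.IsEigenvalueR (lam0 : ℂ) ∧
      ∀ μ : ℂ, A.IsEigenvalueR μ → μ.re ≤ lam0 := by
  simp only [Matrix.IsEigenvalueR]
  have charpoly_eval := fun {R : Type} [CommRing R] (M : Matrix (Fin n) (Fin n) R) (x : R) =>
    MetzlerAux.charpoly_eval M x
  have feas_of_eigen := MetzlerAux.feas_of_eigen A hMetzler
  have perron_strict := fun (M : Matrix (Fin n) (Fin n) ℝ)
    (h : ∀ i j, i ≠ j → 0 < M i j) => MetzlerAux.perron_strict hn M h
  haveI : Nonempty (Fin n) := ⟨⟨0, hn⟩⟩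
  -- the perturbed matrices
  set ε : ℕ → ℝ := fun k => ((k : ℝ) + 1)⁻¹ with hε
  have hεpos : ∀ k, 0 < ε k := fun k => by positivity
  have hεanti : ∀ k, ε (k + 1) ≤ ε k := by
    intro k
    apply inv_anti₀ (by positivity)
    push_cast; linarith
  set Mk : ℕ → Matrix (Fin n) (Fin n) ℝ := fun k => Matrix.of fun i j => A i j + ε k with hMk
  have hMkpos : ∀ k i j, i ≠ j → 0 < Mk k i j := fun k i j hij => by
    have := hMetzler i j hij
    simp only [hMk, Matrix.of_apply]
    linarith [hεpos k]
  choose lam hlamdet hlamw hlamdom using fun k => perron_strict (Mk k) (hMkpos k)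
  -- lam is antitone
  have hanti : Antitone lam := by
    apply antitone_nat_of_succ_le
    intro k
    obtain ⟨w, hw0, hwsum, hwf⟩ := hlamw (k + 1)
    refine hlamdom k (lam (k + 1)) w hw0 hwsum fun i => ?_
    refine (hwf i).trans (Finset.sum_le_sum fun j _ => ?_)
    simp only [hMk, Matrix.of_apply]
    have := hεanti k
    nlinarith [hw0 j]
  -- lam is bounded below
  set blo : ℝ := -(∑ i, ∑ j, |A i j|) with hblo
  have hlb : ∀ k, blo ≤ lam k := by
    intro k
    refine hlamdom k blo (fun _ => (n : ℝ)⁻¹) (fun _ => by positivity) ?_ ?_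
    · simp [Finset.card_univ]
      field_simp
    · intro i
      have h1 : -(∑ j, |A i j|) ≤ ∑ j, A i j := by
        rw [← Finset.sum_neg_distrib]
        exact Finset.sum_le_sum fun j _ => neg_abs_le _
      have h2 : ∑ j, |A i j| ≤ ∑ i, ∑ j, |A i j| :=
        Finset.single_le_sum (f := fun i => ∑ j, |A i j|)
          (fun i _ => Finset.sum_nonneg fun j _ => abs_nonneg _) (Finset.mem_univ i)
      have h3 : blo ≤ ∑ j, A i j + (n:ℝ) * ε k := by
        have : (0:ℝ) ≤ (n:ℝ) * ε k := by positivity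
        simp only [hblo]; linarith
      have hn' : (0:ℝ) < (n:ℝ)⁻¹ := by positivity
      calc blo * (n:ℝ)⁻¹ ≤ (∑ j, A i j + (n:ℝ) * ε k) * (n:ℝ)⁻¹ :=
            mul_le_mul_of_nonneg_right h3 hn'.le
        _ = ∑ j, (A i j + ε k) * (n:ℝ)⁻¹ := by
            simp only [add_mul, Finset.sum_add_distrib, Finset.sum_mul, Finset.sum_const,
              Finset.card_univ, Fintype.card_fin, nsmul_eq_mul]
            have : (n:ℝ) ≠ 0 := by positivity
            field_simp
        _ = ∑ j, Mk k i j * (n:ℝ)⁻¹ := rfl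
  -- convergence
  have hconv : Filter.Tendsto lam Filter.atTop (nhds (⨅ k, lam k)) :=
    tendsto_atTop_ciInf hanti ⟨blo, fun x ⟨k, hk⟩ => hk ▸ hlb k⟩
  set L : ℝ := ⨅ k, lam k with hL
  have hε0 : Filter.Tendsto ε Filter.atTop (nhds 0) := by
    have := tendsto_one_div_add_atTop_nhds_zero_nat (𝕜 := ℝ)
    simpa [hε, one_div] using this
  -- continuity of the det function
  set g : ℝ × ℝ → ℝ := fun p =>
    (Matrix.of fun i j => p.1 * (if i = j then 1 else 0) - (A i j + p.2)).det with hg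
  have hgcont : Continuous g := by
    apply Continuous.matrix_det
    apply continuous_matrix
    intro i j
    exact (continuous_fst.mul continuous_const).sub (continuous_const.add continuous_snd)
  have hgk : ∀ k, g (lam k, ε k) = 0 := by
    intro k
    have hd := hlamdet k
    have hmm : (Matrix.of fun i j => lam k * (if i = j then 1 else 0) - (A i j + ε k))
        = lam k • (1 : Matrix (Fin n) (Fin n) ℝ) - Mk k := by
      ext i j
      simp [Matrix.one_apply, hMk, mul_ite]
    show (Matrix.of fun i j => lam k * (if i = j then 1 else 0) - (A i j + ε k)).det = 0
    rw [hmm]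
    exact hd
  have hgL : g (L, 0) = 0 := by
    have hpair : Filter.Tendsto (fun k => (lam k, ε k)) Filter.atTop (nhds (L, 0)) :=
      hconv.prodMk_nhds hε0
    have h1 : Filter.Tendsto (fun k => g (lam k, ε k)) Filter.atTop (nhds (g (L, 0))) :=
      (hgcont.tendsto (L, 0)).comp hpair
    have h2 : (fun k => g (lam k, ε k)) = fun _ => (0:ℝ) := funext hgk
    rw [h2] at h1
    exact (tendsto_nhds_unique tendsto_const_nhds h1).symm
  -- translate to det (L • 1 - A) = 0
  have hdetA : (L • (1 : Matrix (Fin n) (Fin n) ℝ) - A).det = 0 := by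
    rw [← hgL]
    show _ = (Matrix.of fun i j => L * (if i = j then 1 else 0) - (A i j + (0:ℝ))).det
    congr 1
    ext i j
    simp [Matrix.one_apply, mul_ite]
  refine ⟨L, ?_, ?_⟩
  · show ((A.map Complex.ofReal).charpoly).eval (L:ℂ) = 0
    rw [charpoly_eval]
    have hmap : (L:ℂ) • (1 : Matrix (Fin n) (Fin n) ℂ) - A.map Complex.ofReal
        = (L • (1 : Matrix (Fin n) (Fin n) ℝ) - A).map Complex.ofRealHom := by
      ext i j
      simp [Matrix.map_apply, Matrix.one_apply, apply_ite (fun r : ℝ => (r:ℂ))]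
    rw [hmap, ← RingHom.mapMatrix_apply, ← RingHom.map_det, hdetA, map_zero]
  · intro μ hμ
    have hdet : (μ • (1 : Matrix (Fin n) (Fin n) ℂ) - A.map Complex.ofReal).det = 0 := by
      rw [← charpoly_eval]; exact hμ
    obtain ⟨w, hw0, hwsum, hwf⟩ := feas_of_eigen μ hdet
    have hk : ∀ k, μ.re ≤ lam k := by
      intro k
      refine hlamdom k μ.re w hw0 hwsum fun i => ?_
      refine (hwf i).trans ?_
      have : A.mulVec w i = ∑ j, A i j * w j := by
        simp [Matrix.mulVec, dotProduct]
      rw [this]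
      refine Finset.sum_le_sum fun j _ => ?_
      simp only [hMk, Matrix.of_apply]
      nlinarith [hw0 j, hεpos k]
    exact le_ciInf hk

end
end

section
/- Let μ, β, β_w, x₁, U, W be strictly positive real numbers, and let J_P be the real 3×3 matrix with rows (−μ − βU, −βx₁, 0), (βU, 0, −β_w U), (0, β_w W, 0). Then every complex eigenvalue of J_P has strictly negative real part; in particular J_P has no purely imaginary eigenvalues. -/
open Matrix Polynomial

noncomputable section

/-- Routh–Hurwitz for a monic cubic: if `a, b, c > 0` and `c < a*b`, every
complex root of `λ³ + aλ² + bλ + c` has negative real part. -/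
lemma cubic_hurwitz (a b c : ℝ) (ha : 0 < a) (hb : 0 < b) (hc : 0 < c)
    (habc : c < a * b) (lam : ℂ)
    (h : lam^3 + (a:ℂ)*lam^2 + (b:ℂ)*lam + (c:ℂ) = 0) : lam.re < 0 := by
  by_contra hx
  push_neg at hx
  have h3 : lam^3 = lam*lam*lam := by ring
  have h2 : lam^2 = lam*lam := by ring
  rw [h3, h2] at h
  have hre := congrArg Complex.re h
  have him := congrArg Complex.im h
  simp [Complex.add_re, Complex.add_im, Complex.mul_re, Complex.mul_im] at hre him
  set x := lam.re with hxdef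
  set y := lam.im with hydef
  rcases eq_or_ne y 0 with hy | hy
  · rw [hy] at hre
    simp at hre
    nlinarith [mul_nonneg hx hx, mul_nonneg (mul_nonneg hx hx) hx]
  · have hfac : y * (3*x^2 - y^2 + 2*a*x + b) = 0 := by linear_combination him
    have hyy : y^2 = 3*x^2 + 2*a*x + b := by
      rcases mul_eq_zero.mp hfac with h' | h'
      · exact absurd h' hy
      · linarith
    have key : c = 8*x^3 + 8*a*x^2 + 2*b*x + 2*a^2*x + a*b := by
      linear_combination hre + (3*x + a)*hyy
    nlinarith [mul_nonneg hx hx, mul_nonneg (mul_nonneg hx hx) hx, mul_nonneg ha.le hx,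
      mul_nonneg hb.le hx, mul_nonneg (mul_nonneg ha.le ha.le) hx,
      mul_nonneg (mul_nonneg ha.le hx) hx]

/-- The platform block `J_P` at an equilibrium on the RFE branch is Hurwitz:
every complex eigenvalue has strictly negative real part. -/
theorem platform_block_hurwitz (μ β βw x₁ U W : ℝ)
    (hμ : 0 < μ) (hβ : 0 < β) (hβw : 0 < βw) (hx₁ : 0 < x₁) (hU : 0 < U) (hW : 0 < W) :
    ∀ lam : ℂ,
      (!![-μ - β * U, -β * x₁, 0;
          β * U, 0, -βw * U;
          0, βw * W, 0] : Matrix (Fin 3) (Fin 3) ℝ).IsEigenvalueR lam →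
      lam.re < 0 := by
  intro lam hlam
  have heval : eval lam
      ((!![-μ - β * U, -β * x₁, 0;
          β * U, 0, -βw * U;
          0, βw * W, 0] : Matrix (Fin 3) (Fin 3) ℝ).map Complex.ofReal).charpoly
      = lam^3 + ((μ + β*U : ℝ):ℂ)*lam^2
        + ((βw^2*U*W + β^2*x₁*U : ℝ):ℂ)*lam + (((μ + β*U)*(βw^2*U*W) : ℝ):ℂ) := by
    rw [Matrix.charpoly, ← Polynomial.coe_evalRingHom, RingHom.map_det]
    show Matrix.det (Matrix.of fun i j => eval lam (charmatrix _ i j)) = _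
    rw [Matrix.det_fin_three]
    simp [charmatrix_apply, Matrix.map_apply]
    ring
  have h0 : lam^3 + ((μ + β*U : ℝ):ℂ)*lam^2
        + ((βw^2*U*W + β^2*x₁*U : ℝ):ℂ)*lam + (((μ + β*U)*(βw^2*U*W) : ℝ):ℂ) = 0 := by
    rw [← heval]; exact hlam
  refine cubic_hurwitz (μ + β*U) (βw^2*U*W + β^2*x₁*U) ((μ + β*U)*(βw^2*U*W))
    (by positivity) (by positivity) (by positivity) ?_ lam (by linear_combination h0)
  have h1 : 0 < μ + β*U := by positivity
  nlinarith [mul_pos (mul_pos (mul_pos hβ hβ) hx₁) hU, h1]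
end
end

section
/- Let A be a real n×n matrix all of whose complex eigenvalues have strictly negative real part (A is Hurwitz), let u, v ∈ ℝ^n and κ ∈ ℝ, and define J := A + κ u vᵀ. Suppose that for every complex number λ with Re(λ) ≥ 0 one has |κ · vᵀ (λI − A)⁻¹ u| < 1 (the resolvent (λI − A)⁻¹ exists for all such λ since A is Hurwitz). Then J is Hurwitz: every complex eigenvalue of J has strictly negative real part. -/
open Matrix Polynomial

noncomputable section

/-- A real matrix is Hurwitz if every complex eigenvalue has strictly negative
real part. -/
def Matrix.IsHurwitz {n : ℕ} (A : Matrix (Fin n) (Fin n) ℝ) : Prop :=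
  ∀ μ : ℂ, A.IsEigenvalueR μ → μ.re < 0

lemma eval_charpoly' {n : ℕ} (M : Matrix (Fin n) (Fin n) ℂ) (μ : ℂ) :
    M.charpoly.eval μ = (μ • (1 : Matrix (Fin n) (Fin n) ℂ) - M).det := by
  rw [Matrix.charpoly, ← Polynomial.coe_evalRingHom, RingHom.map_det]
  congr 1
  ext i j
  by_cases h : i = j <;>
    simp [charmatrix_apply, Matrix.diagonal_apply, Matrix.one_apply, h]

/-- Stability of rank-one perturbations: if `A` is Hurwitz and the closed-loop gain
`|κ vᵀ (λI - A)⁻¹ u| < 1` for every `λ` with `Re λ ≥ 0`, then `J = A + κ u vᵀ`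
is Hurwitz. -/
theorem rank_one_perturbation_hurwitz (n : ℕ) (A : Matrix (Fin n) (Fin n) ℝ)
    (hA : A.IsHurwitz) (u v : Fin n → ℝ) (κ : ℝ)
    (hgain : ∀ lam : ℂ, 0 ≤ lam.re →
      ‖(κ : ℂ) *
        (fun i => (v i : ℂ)) ⬝ᵥ
          ((lam • (1 : Matrix (Fin n) (Fin n) ℂ) - A.map Complex.ofReal)⁻¹ *ᵥ
            fun i => (u i : ℂ))‖ < 1) :
    (A + κ • Matrix.vecMulVec u v).IsHurwitz := by
  intro μ hμ
  by_contra hre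
  push_neg at hre
  set Ac : Matrix (Fin n) (Fin n) ℂ := A.map Complex.ofReal with hAc
  set uc : Fin n → ℂ := fun i => (u i : ℂ)
  set vc : Fin n → ℂ := fun i => (v i : ℂ)
  set B : Matrix (Fin n) (Fin n) ℂ := μ • (1 : Matrix (Fin n) (Fin n) ℂ) - Ac with hB
  -- B is invertible since A is Hurwitz and Re μ ≥ 0
  have hdetB : B.det ≠ 0 := by
    intro h0
    have : A.IsEigenvalueR μ := by
      rw [Matrix.IsEigenvalueR, Polynomial.IsRoot, eval_charpoly']
      exact h0
    exact absurd (hA μ this) (not_lt.mpr hre)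
  -- the complexified J
  have hmap : ((A + κ • Matrix.vecMulVec u v).map Complex.ofReal)
      = Ac + (κ : ℂ) • Matrix.vecMulVec uc vc := by
    ext i j
    simp [Matrix.map_apply, Matrix.vecMulVec_apply, hAc, uc, vc]
  have hroot : (μ • (1 : Matrix (Fin n) (Fin n) ℂ)
      - (Ac + (κ : ℂ) • Matrix.vecMulVec uc vc)).det = 0 := by
    have := hμ
    rw [Matrix.IsEigenvalueR, Polynomial.IsRoot, eval_charpoly', hmap] at this
    exact this
  -- rewrite using the matrix determinant lemma
  have hsplit : μ • (1 : Matrix (Fin n) (Fin n) ℂ)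
      - (Ac + (κ : ℂ) • Matrix.vecMulVec uc vc)
      = B + Matrix.replicateCol (Fin 1) (fun i => -(κ : ℂ) * uc i) * Matrix.replicateRow (Fin 1) vc := by
    erw [← Matrix.vecMulVec_eq (Fin 1)]
    ext i j
    simp [hB, Matrix.vecMulVec_apply]
    ring
  rw [hsplit] at hroot
  erw [Matrix.det_add_replicateCol_mul_replicateRow (isUnit_iff_ne_zero.mpr hdetB)] at hroot
  have h1x1 : (1 + Matrix.replicateRow (Fin 1) vc * B⁻¹ * Matrix.replicateCol (Fin 1) (fun i => -(κ : ℂ) * uc i)).det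
      = 1 - (κ : ℂ) * (vc ⬝ᵥ B⁻¹ *ᵥ uc) := by
    rw [Matrix.det_unique]
    simp [Matrix.mul_apply, Matrix.one_apply, dotProduct, Matrix.mulVec, Finset.mul_sum,
      Finset.sum_mul, sub_eq_add_neg]
    rw [Finset.sum_comm]
    apply Finset.sum_congr rfl
    intro i _
    apply Finset.sum_congr rfl
    intro j _
    ring
  have hfac : (1 : ℂ) - (κ : ℂ) * (vc ⬝ᵥ B⁻¹ *ᵥ uc) = 0 := by
    rw [← h1x1]
    exact (mul_eq_zero.mp hroot).resolve_left hdetB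
  have hgain' := hgain μ hre
  have : (κ : ℂ) * (vc ⬝ᵥ B⁻¹ *ᵥ uc) = 1 := by linear_combination -hfac
  rw [this] at hgain'
  simp at hgain'
end
end

section
/- Let A be a real n×n Metzler matrix (all off-diagonal entries nonnegative) that is Hurwitz (every complex eigenvalue has strictly negative real part). Then A is invertible with −A⁻¹ entrywise nonnegative, and for every complex λ with Re(λ) ≥ 0 the resolvent (λI − A)⁻¹ exists and satisfies the entrywise bound |((λI − A)⁻¹)_{ij}| ≤ (−A⁻¹)_{ij} for all indices i, j. In particular, sup over {Re λ ≥ 0} of |((λI − A)⁻¹)_{ij}| is attained at λ = 0 and equals (−A⁻¹)_{ij}. -/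
open Matrix Polynomial Filter Topology
open scoped NNReal ENNReal

noncomputable section

namespace MHAux

attribute [local instance] Matrix.linftyOpNormedAddCommGroup Matrix.linftyOpNormedRing
  Matrix.linftyOpNormedAlgebra

variable {n : ℕ}

instance : CompleteSpace (Matrix (Fin n) (Fin n) ℂ) :=
  FiniteDimensional.complete ℂ (Matrix (Fin n) (Fin n) ℂ)

lemma entry_norm_le (M : Matrix (Fin n) (Fin n) ℂ) (i j : Fin n) : ‖M i j‖ ≤ ‖M‖ := by
  have h1 : ‖M i j‖₊ ≤ ∑ j' : Fin n, ‖M i j'‖₊ :=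
    Finset.single_le_sum (f := fun j' => ‖M i j'‖₊) (fun _ _ => zero_le) (Finset.mem_univ j)
  have h2 : (∑ j' : Fin n, ‖M i j'‖₊) ≤ (Finset.univ : Finset (Fin n)).sup
      fun i : Fin n => ∑ j' : Fin n, ‖M i j'‖₊ :=
    Finset.le_sup (f := fun i => ∑ j' : Fin n, ‖M i j'‖₊) (Finset.mem_univ i)
  rw [Matrix.linfty_opNorm_def]
  exact_mod_cast h1.trans h2

lemma eval_charpoly_smul (M : Matrix (Fin n) (Fin n) ℂ) (r : ℂ) :
    M.charpoly.eval r = (r • (1 : Matrix (Fin n) (Fin n) ℂ) - M).det := by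
  rw [Matrix.charpoly, eval_det, matPolyEquiv_charmatrix]
  rw [Polynomial.eval_sub, Polynomial.eval_X, Polynomial.eval_C]
  congr 1
  rw [Matrix.scalar_apply, Matrix.smul_one_eq_diagonal]

lemma tsum_telescope {v : ℕ → ℂ} (hv : Summable v) (h0 : Tendsto v atTop (𝓝 0)) :
    ∑' k, (v k - v (k + 1)) = v 0 := by
  have hv1 : Summable fun k => v (k + 1) := (summable_nat_add_iff 1).mpr hv
  have hs : Summable fun k => v k - v (k + 1) := hv.sub hv1
  have h1 := hs.hasSum.tendsto_sum_nat
  have h2 : (fun N => ∑ i ∈ Finset.range N, (v i - v (i + 1))) = fun N => v 0 - v N := by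
    funext N; exact Finset.sum_range_sub' v N
  rw [h2] at h1
  have h3 : Tendsto (fun N => v 0 - v N) atTop (𝓝 (v 0 - 0)) := tendsto_const_nhds.sub h0
  have := tendsto_nhds_unique h1 h3
  rw [this, sub_zero]

end MHAux

section Main

attribute [local instance] Matrix.linftyOpNormedAddCommGroup Matrix.linftyOpNormedRing
  Matrix.linftyOpNormedAlgebra

/-- DC-gain collapse for a Metzler Hurwitz matrix: `A` is invertible with `-A⁻¹ ≥ 0`
entrywise, the resolvent `(λI - A)⁻¹` exists for every `λ` with `Re λ ≥ 0` and is
entrywise dominated by `-A⁻¹`; the bound is attained (entrywise, as an equality) at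
`λ = 0`. -/
theorem metzler_hurwitz_resolvent_bound (n : ℕ) (A : Matrix (Fin n) (Fin n) ℝ)
    (hMetzler : ∀ i j, i ≠ j → 0 ≤ A i j) (hHur : A.IsHurwitz) :
    IsUnit A.det ∧
    (∀ i j, 0 ≤ (-(A⁻¹)) i j) ∧
    (∀ lam : ℂ, 0 ≤ lam.re →
      IsUnit (lam • (1 : Matrix (Fin n) (Fin n) ℂ) - A.map Complex.ofReal).det ∧
      ∀ i j, ‖
          (((lam • (1 : Matrix (Fin n) (Fin n) ℂ) - A.map Complex.ofReal)⁻¹) i j)‖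
        ≤ (-(A⁻¹)) i j) ∧
    (∀ i j, ‖
        ((((0 : ℂ) • (1 : Matrix (Fin n) (Fin n) ℂ) - A.map Complex.ofReal)⁻¹) i j)‖
      = (-(A⁻¹)) i j) := by
  classical
  set Ac := A.map Complex.ofReal with hAcdef
  have hchar : ∀ r : ℂ, Ac.charpoly.eval r = (r • (1 : Matrix (Fin n) (Fin n) ℂ) - Ac).det :=
    MHAux.eval_charpoly_smul Ac
  have hroot_re : ∀ μ : ℂ, Ac.charpoly.IsRoot μ → μ.re < 0 := fun μ h => hHur μ h
  have hdet_res : ∀ lam : ℂ, 0 ≤ lam.re →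
      (lam • (1 : Matrix (Fin n) (Fin n) ℂ) - Ac).det ≠ 0 := by
    intro lam hl h0
    have hroot : Ac.charpoly.IsRoot lam := by rw [Polynomial.IsRoot, hchar]; exact h0
    linarith [hroot_re lam hroot]
  have hAcdet : Ac.det ≠ 0 := by
    intro h
    apply hdet_res 0 (by simp)
    rw [zero_smul, zero_sub, Matrix.det_neg, h, mul_zero]
  have hAdet0 : A.det ≠ 0 := by
    intro h
    apply hAcdet
    have hmap : Ac.det = ((A.det : ℝ) : ℂ) := (RingHom.map_det Complex.ofRealHom A).symm
    rw [hmap, h, Complex.ofReal_zero]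
  have hAdet : IsUnit A.det := isUnit_iff_ne_zero.mpr hAdet0
  have hA_mul_inv : A * A⁻¹ = 1 := Matrix.mul_nonsing_inv A hAdet
  have hAc_mul : Ac * (A⁻¹).map Complex.ofReal = 1 := by
    have h := map_mul (Complex.ofRealHom.mapMatrix (m := Fin n)) A A⁻¹
    rw [hA_mul_inv, _root_.map_one] at h
    exact h.symm
  have hAcinv : Ac⁻¹ = (A⁻¹).map Complex.ofReal := Matrix.inv_eq_right_inv hAc_mul
  have hAcdetU : IsUnit Ac.det := isUnit_iff_ne_zero.mpr hAcdet
  have hnegAcinv : (-Ac)⁻¹ = -(Ac⁻¹) :=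
    Matrix.inv_eq_right_inv (by rw [neg_mul_neg, Matrix.mul_nonsing_inv Ac hAcdetU])
  -- choice of the shift `s`
  set g : ℂ → ℝ := fun μ => ‖μ‖ ^ 2 / (-(2 * μ.re)) with hgdef
  set F : Finset ℝ := insert 0 ((Ac.charpoly.roots.toFinset.image g) ∪
      (Finset.univ.image fun i : Fin n => -A i i)) with hF
  have hFne : F.Nonempty := Finset.insert_nonempty _ _
  set s : ℝ := 1 + F.max' hFne with hsdef
  have hsF : ∀ x ∈ F, x ≤ s - 1 := by
    intro x hx
    have h := Finset.le_max' F x hx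
    rw [hsdef]; linarith
  have hs1 : 1 ≤ s := by
    have := hsF 0 (Finset.mem_insert_self _ _); linarith
  have hs : 0 < s := by linarith
  have hrootmem : ∀ μ : ℂ, Ac.charpoly.IsRoot μ → μ ∈ Ac.charpoly.roots.toFinset := by
    intro μ h
    rw [Multiset.mem_toFinset, Polynomial.mem_roots (Ac.charpoly_monic.ne_zero)]
    exact h
  have hμs : ∀ μ : ℂ, Ac.charpoly.IsRoot μ → ‖μ + (s : ℂ)‖ < s := by
    intro μ hμ
    have hre := hroot_re μ hμ
    have hgmem : g μ ∈ F := Finset.mem_insert_of_mem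
      (Finset.mem_union_left _ (Finset.mem_image_of_mem g (hrootmem μ hμ)))
    have hgs : g μ < s := by have := hsF _ hgmem; linarith
    have h2re : 0 < -(2 * μ.re) := by linarith
    have h2 : ‖μ‖ ^ 2 < s * (-(2 * μ.re)) := by
      rw [hgdef] at hgs
      rw [div_lt_iff₀ h2re] at hgs
      linarith
    have hμ2 : ‖μ‖ ^ 2 = μ.re ^ 2 + μ.im ^ 2 := by
      rw [Complex.sq_norm, Complex.normSq_apply]; ring
    have hn2 : ‖μ + (s : ℂ)‖ ^ 2 = (μ.re + s) ^ 2 + μ.im ^ 2 := by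
      rw [Complex.sq_norm, Complex.normSq_apply]
      simp only [Complex.add_re, Complex.add_im, Complex.ofReal_re, Complex.ofReal_im]
      ring
    have hsq : ‖μ + (s : ℂ)‖ ^ 2 < s ^ 2 := by nlinarith
    nlinarith [norm_nonneg (μ + (s : ℂ))]
  -- the nonnegative matrix B
  set B := A + s • (1 : Matrix (Fin n) (Fin n) ℝ) with hBdef
  have hB0 : ∀ i j, 0 ≤ B i j := by
    intro i j
    by_cases h : i = j
    · subst h
      have hd : -A i i ∈ F := Finset.mem_insert_of_mem
        (Finset.mem_union_right _ (Finset.mem_image_of_mem _ (Finset.mem_univ i)))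
      have h1 := hsF _ hd
      have h2 : B i i = A i i + s := by
        simp [hBdef, Matrix.add_apply, Matrix.smul_apply, Matrix.one_apply_eq]
      rw [h2]; linarith
    · have h2 : B i j = A i j := by
        simp [hBdef, Matrix.add_apply, Matrix.smul_apply, Matrix.one_apply_ne h]
      rw [h2]; exact hMetzler i j h
  have hBk : ∀ (k : ℕ) (i j : Fin n), 0 ≤ (B ^ k) i j := by
    intro k
    induction k with
    | zero =>
      intro i j
      rw [pow_zero, Matrix.one_apply]
      split <;> norm_num
    | succ k ih =>
      intro i j
      rw [pow_succ, Matrix.mul_apply]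
      exact Finset.sum_nonneg fun l _ => mul_nonneg (ih i l) (hB0 l j)
  set Bc := Ac + (s : ℂ) • (1 : Matrix (Fin n) (Fin n) ℂ) with hBcdef
  have hBcmap : Bc = B.map Complex.ofReal := by
    ext i j
    by_cases h : i = j
    · subst h
      simp [hBcdef, hBdef, Matrix.map_apply, Matrix.add_apply, Matrix.smul_apply,
        Matrix.one_apply_eq, hAcdef]
    · simp [hBcdef, hBdef, Matrix.map_apply, Matrix.add_apply, Matrix.smul_apply,
        Matrix.one_apply_ne h, hAcdef]
  have hBck : ∀ k : ℕ, Bc ^ k = (B ^ k).map Complex.ofReal := by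
    intro k
    rw [hBcmap]
    exact (map_pow (Complex.ofRealHom.mapMatrix (m := Fin n)) B k).symm
  have hentry : ∀ (k : ℕ) (i j : Fin n), (Bc ^ k) i j = (((B ^ k) i j : ℝ) : ℂ) := by
    intro k i j; rw [hBck]; rfl
  have hennorm : ∀ (k : ℕ) (i j : Fin n), ‖(Bc ^ k) i j‖ = (B ^ k) i j := by
    intro k i j
    rw [hentry, Complex.norm_real, Real.norm_eq_abs, abs_of_nonneg (hBk k i j)]
  -- spectral radius bound
  set r : ℝ := (insert (0:ℝ) (Ac.charpoly.roots.toFinset.image fun μ =>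
      ‖μ + (s : ℂ)‖)).max' (Finset.insert_nonempty _ _) with hrdef
  have hr0 : 0 ≤ r := by
    rw [hrdef]; exact Finset.le_max' _ 0 (Finset.mem_insert_self _ _)
  have hrs : r < s := by
    rw [hrdef, Finset.max'_lt_iff]
    intro x hx
    rcases Finset.mem_insert.mp hx with h | h
    · rw [h]; exact hs
    · obtain ⟨μ, hμmem, rfl⟩ := Finset.mem_image.mp h
      exact hμs μ ((Polynomial.mem_roots'.mp (Multiset.mem_toFinset.mp hμmem)).2)
  have hrb : ∀ μ : ℂ, Ac.charpoly.IsRoot μ → ‖μ + (s : ℂ)‖ ≤ r := by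
    intro μ h
    rw [hrdef]
    exact Finset.le_max' _ _ (Finset.mem_insert_of_mem
      (Finset.mem_image_of_mem (fun μ => ‖μ + (s : ℂ)‖) (hrootmem μ h)))
  have hspecrad : spectralRadius ℂ Bc ≤ ((r.toNNReal : ℝ≥0) : ℝ≥0∞) := by
    apply iSup₂_le
    intro z hz
    have hznotunit : ¬ IsUnit (z • (1 : Matrix (Fin n) (Fin n) ℂ) - Bc) := by
      have h := spectrum.mem_iff.mp hz
      rwa [Algebra.algebraMap_eq_smul_one] at h
    have hdet0 : (z • (1 : Matrix (Fin n) (Fin n) ℂ) - Bc).det = 0 := by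
      by_contra hne
      exact hznotunit ((Matrix.isUnit_iff_isUnit_det _).mpr (isUnit_iff_ne_zero.mpr hne))
    have hident : z • (1 : Matrix (Fin n) (Fin n) ℂ) - Bc
        = (z - s) • (1 : Matrix (Fin n) (Fin n) ℂ) - Ac := by
      rw [hBcdef, sub_smul]; abel
    have hroot : Ac.charpoly.IsRoot (z - s) := by
      rw [Polynomial.IsRoot, hchar, ← hident]; exact hdet0
    have hzb : ‖z‖ ≤ r := by
      have h := hrb _ hroot; rwa [sub_add_cancel] at h
    exact ENNReal.coe_le_coe.mpr ((Real.le_toNNReal_iff_coe_le hr0).mpr (by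
      rw [coe_nnnorm]; exact hzb))
  set r' : ℝ := (r + s) / 2 with hr'def
  have hr'pos : 0 < r' := by rw [hr'def]; linarith
  have hrr' : r < r' := by rw [hr'def]; linarith
  have hr's : r' < s := by rw [hr'def]; linarith
  have hlt : spectralRadius ℂ Bc < ((r'.toNNReal : ℝ≥0) : ℝ≥0∞) := by
    refine lt_of_le_of_lt hspecrad ?_
    rw [ENNReal.coe_lt_coe, ← NNReal.coe_lt_coe, Real.coe_toNNReal _ hr0,
      Real.coe_toNNReal _ hr'pos.le]
    exact hrr'
  have hG := spectrum.pow_nnnorm_pow_one_div_tendsto_nhds_spectralRadius Bc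
  have hev : ∀ᶠ k : ℕ in atTop,
      ((‖Bc ^ k‖₊ : ℝ≥0∞)) ^ (1 / (k : ℝ)) < ((r'.toNNReal : ℝ≥0) : ℝ≥0∞) :=
    hG.eventually (eventually_lt_nhds hlt)
  have hevnorm : ∀ᶠ k : ℕ in atTop, ‖Bc ^ k‖ ≤ r' ^ k := by
    filter_upwards [hev, Filter.eventually_gt_atTop 0] with k hk hkpos
    have hk' : (((‖Bc ^ k‖₊ : ℝ≥0∞)) ^ (1 / (k : ℝ))) ^ (k : ℝ)
        < (((r'.toNNReal : ℝ≥0) : ℝ≥0∞)) ^ (k : ℝ) :=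
      ENNReal.rpow_lt_rpow hk (by exact_mod_cast hkpos)
    rw [← ENNReal.rpow_mul, one_div_mul_cancel (by exact_mod_cast hkpos.ne' : (k:ℝ) ≠ 0),
      ENNReal.rpow_one] at hk'
    rw [← ENNReal.coe_rpow_of_nonneg _ (by positivity), ENNReal.coe_lt_coe,
      NNReal.rpow_natCast] at hk'
    have h2 : ‖Bc ^ k‖ ≤ ((r'.toNNReal ^ k : ℝ≥0) : ℝ) := by
      exact_mod_cast hk'.le
    rw [NNReal.coe_pow, Real.coe_toNNReal _ hr'pos.le] at h2
    exact h2
  have hsumN : Summable (fun k : ℕ => ‖Bc ^ k‖ * s⁻¹ ^ k) := by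
    have hlt1 : r' * s⁻¹ < 1 := by
      calc r' * s⁻¹ < s * s⁻¹ := mul_lt_mul_of_pos_right hr's (inv_pos.mpr hs)
        _ = 1 := mul_inv_cancel₀ hs.ne'
    have hgeo : Summable (fun k : ℕ => (r' * s⁻¹) ^ k) :=
      summable_geometric_of_lt_one (by positivity) hlt1
    apply hgeo.of_norm_bounded_eventually
    rw [Nat.cofinite_eq_atTop]
    filter_upwards [hevnorm] with k hk
    rw [Real.norm_eq_abs, abs_of_nonneg (by positivity)]
    calc ‖Bc ^ k‖ * s⁻¹ ^ k ≤ r' ^ k * s⁻¹ ^ k :=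
          mul_le_mul_of_nonneg_right hk (by positivity)
      _ = (r' * s⁻¹) ^ k := (mul_pow r' s⁻¹ k).symm
  have hBle : ∀ (k : ℕ) (i j : Fin n), (B ^ k) i j ≤ ‖Bc ^ k‖ := by
    intro k i j; rw [← hennorm k i j]; exact MHAux.entry_norm_le _ i j
  have hts : ∀ i j, Summable (fun k : ℕ => s⁻¹ ^ (k+1) * (B ^ k) i j) := by
    intro i j
    refine Summable.of_nonneg_of_le
      (fun k => mul_nonneg (by positivity) (hBk k i j)) (fun k => ?_) (hsumN.mul_left s⁻¹)
    calc s⁻¹ ^ (k+1) * (B ^ k) i j = s⁻¹ * (s⁻¹ ^ k * (B ^ k) i j) := by ring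
      _ ≤ s⁻¹ * (‖Bc ^ k‖ * s⁻¹ ^ k) := by
          refine mul_le_mul_of_nonneg_left ?_ (by positivity)
          calc s⁻¹ ^ k * (B ^ k) i j ≤ s⁻¹ ^ k * ‖Bc ^ k‖ :=
                mul_le_mul_of_nonneg_left (hBle k i j) (by positivity)
            _ = ‖Bc ^ k‖ * s⁻¹ ^ k := mul_comm _ _
  -- entrywise bounds for the resolvent series
  have hzne : ∀ z : ℂ, s ≤ ‖z‖ → z ≠ 0 := by
    intro z hz h; rw [h, norm_zero] at hz; linarith
  have hb : ∀ z : ℂ, s ≤ ‖z‖ → ∀ (i j : Fin n) (k : ℕ),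
      ‖z⁻¹ ^ (k+1) * (Bc ^ k) i j‖ ≤ s⁻¹ ^ (k+1) * (B ^ k) i j := by
    intro z hz i j k
    have hzinv : ‖z⁻¹‖ ≤ s⁻¹ := by
      rw [norm_inv]
      exact inv_anti₀ hs hz
    rw [norm_mul, norm_pow, hennorm k i j]
    exact mul_le_mul_of_nonneg_right (pow_le_pow_left₀ (norm_nonneg _) hzinv _) (hBk k i j)
  have hsumz : ∀ z : ℂ, s ≤ ‖z‖ → ∀ i j,
      Summable (fun k : ℕ => z⁻¹ ^ (k+1) * (Bc ^ k) i j) := by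
    intro z hz i j
    exact Summable.of_norm_bounded (hts i j) (hb z hz i j)
  have hker : ∀ z : ℂ, s ≤ ‖z‖ →
      (z • (1 : Matrix (Fin n) (Fin n) ℂ) - Bc) *
        (Matrix.of fun i j => ∑' k : ℕ, z⁻¹ ^ (k+1) * (Bc ^ k) i j) = 1 := by
    intro z hz
    have hz0 : z ≠ 0 := hzne z hz
    have hsumz' : ∀ i j, Summable (fun k : ℕ => z⁻¹ ^ k * (Bc ^ k) i j) := by
      intro i j
      refine ((hsumz z hz i j).mul_left z).congr fun k => ?_
      linear_combination ((Bc ^ k) i j * z⁻¹ ^ k) * mul_inv_cancel₀ hz0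
    ext i j
    rw [Matrix.mul_apply]
    calc ∑ l : Fin n, (z • (1 : Matrix (Fin n) (Fin n) ℂ) - Bc) i l *
          (Matrix.of fun i j => ∑' k : ℕ, z⁻¹ ^ (k+1) * (Bc ^ k) i j) l j
        = ∑ l : Fin n, ∑' k : ℕ, (z • (1 : Matrix (Fin n) (Fin n) ℂ) - Bc) i l *
            (z⁻¹ ^ (k+1) * (Bc ^ k) l j) := by
          refine Finset.sum_congr rfl fun l _ => ?_
          rw [Matrix.of_apply, tsum_mul_left]
      _ = ∑' k : ℕ, ∑ l : Fin n, (z • (1 : Matrix (Fin n) (Fin n) ℂ) - Bc) i l *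
            (z⁻¹ ^ (k+1) * (Bc ^ k) l j) :=
          (Summable.tsum_finsetSum fun l _ => (hsumz z hz l j).mul_left _).symm
      _ = ∑' k : ℕ, (z⁻¹ ^ k * (Bc ^ k) i j - z⁻¹ ^ (k+1) * (Bc ^ (k+1)) i j) := by
          refine tsum_congr fun k => ?_
          have hinner : ∑ l : Fin n, (z • (1 : Matrix (Fin n) (Fin n) ℂ) - Bc) i l *
              (z⁻¹ ^ (k+1) * (Bc ^ k) l j)
              = z⁻¹ ^ (k+1) * (((z • (1 : Matrix (Fin n) (Fin n) ℂ) - Bc) * (Bc ^ k)) i j) := by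
            rw [Matrix.mul_apply, Finset.mul_sum]
            exact Finset.sum_congr rfl fun l _ => by ring
          rw [hinner]
          have hmul : ((z • (1 : Matrix (Fin n) (Fin n) ℂ) - Bc) * (Bc ^ k)) i j
              = z * (Bc ^ k) i j - (Bc ^ (k+1)) i j := by
            rw [sub_mul, smul_mul_assoc, one_mul, ← pow_succ', Matrix.sub_apply,
              Matrix.smul_apply, smul_eq_mul]
          rw [hmul]
          linear_combination ((Bc ^ k) i j * z⁻¹ ^ k) * inv_mul_cancel₀ hz0
      _ = z⁻¹ ^ 0 * (Bc ^ 0) i j :=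
          MHAux.tsum_telescope (hsumz' i j) ((hsumz' i j).tendsto_atTop_zero)
      _ = (1 : Matrix (Fin n) (Fin n) ℂ) i j := by simp
  have hzlam : ∀ lam : ℂ, 0 ≤ lam.re → s ≤ ‖lam + (s : ℂ)‖ := by
    intro lam hlam
    have h1 : (lam + (s : ℂ)).re ≤ ‖lam + (s : ℂ)‖ := by
      exact Complex.re_le_norm _
    have h2 : (lam + (s : ℂ)).re = lam.re + s := by simp
    linarith
  have hresolv : ∀ lam : ℂ, 0 ≤ lam.re →
      (lam • (1 : Matrix (Fin n) (Fin n) ℂ) - Ac)⁻¹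
        = Matrix.of fun i j => ∑' k : ℕ, (lam + (s:ℂ))⁻¹ ^ (k+1) * (Bc ^ k) i j := by
    intro lam hlam
    have hident : lam • (1 : Matrix (Fin n) (Fin n) ℂ) - Ac
        = (lam + (s:ℂ)) • (1 : Matrix (Fin n) (Fin n) ℂ) - Bc := by
      rw [hBcdef, add_smul]; abel
    rw [hident]
    exact Matrix.inv_eq_right_inv (hker _ (hzlam lam hlam))
  have hbound : ∀ z : ℂ, s ≤ ‖z‖ → ∀ i j,
      ‖∑' k : ℕ, z⁻¹ ^ (k+1) * (Bc ^ k) i j‖ ≤ ∑' k : ℕ, s⁻¹ ^ (k+1) * (B ^ k) i j := by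
    intro z hz i j
    have hnormsum : Summable (fun k : ℕ => ‖z⁻¹ ^ (k+1) * (Bc ^ k) i j‖) :=
      Summable.of_nonneg_of_le (fun _ => norm_nonneg _) (hb z hz i j) (hts i j)
    calc ‖∑' k : ℕ, z⁻¹ ^ (k+1) * (Bc ^ k) i j‖
        ≤ ∑' k : ℕ, ‖z⁻¹ ^ (k+1) * (Bc ^ k) i j‖ := norm_tsum_le_tsum_norm hnormsum
      _ ≤ ∑' k : ℕ, s⁻¹ ^ (k+1) * (B ^ k) i j :=
          Summable.tsum_le_tsum (hb z hz i j) hnormsum (hts i j)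
  set T : Fin n → Fin n → ℝ := fun i j => ∑' k : ℕ, s⁻¹ ^ (k+1) * (B ^ k) i j with hTdef
  have hT0 : ∀ i j, 0 ≤ T i j :=
    fun i j => tsum_nonneg fun k => mul_nonneg (by positivity) (hBk k i j)
  have hzeroent : ∀ i j, (((0:ℂ) • (1 : Matrix (Fin n) (Fin n) ℂ) - Ac)⁻¹) i j
      = ((T i j : ℝ) : ℂ) := by
    intro i j
    rw [hresolv 0 (by simp), Matrix.of_apply, hTdef]
    rw [show ((∑' k : ℕ, s⁻¹ ^ (k+1) * (B ^ k) i j : ℝ) : ℂ)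
        = ∑' k : ℕ, ((s⁻¹ ^ (k+1) * (B ^ k) i j : ℝ) : ℂ) from
      Complex.ofRealCLM.map_tsum (hts i j)]
    refine tsum_congr fun k => ?_
    rw [hentry k i j, zero_add]
    push_cast
    ring
  have hzeroent2 : ∀ i j, (((0:ℂ) • (1 : Matrix (Fin n) (Fin n) ℂ) - Ac)⁻¹) i j
      = (((-(A⁻¹)) i j : ℝ) : ℂ) := by
    intro i j
    have h0 : (0:ℂ) • (1 : Matrix (Fin n) (Fin n) ℂ) - Ac = -Ac := by
      rw [zero_smul, zero_sub]
    rw [h0, hnegAcinv, hAcinv]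
    simp [Matrix.neg_apply, Matrix.map_apply]
  have hTA : ∀ i j, (-(A⁻¹)) i j = T i j := by
    intro i j
    have h := (hzeroent2 i j).symm.trans (hzeroent i j)
    exact_mod_cast h
  refine ⟨hAdet, ?_, ?_, ?_⟩
  · intro i j; rw [hTA]; exact hT0 i j
  · intro lam hlam
    refine ⟨isUnit_iff_ne_zero.mpr (hdet_res lam hlam), ?_⟩
    intro i j
    rw [hresolv lam hlam, Matrix.of_apply, hTA i j]
    exact hbound _ (hzlam lam hlam) i j
  · intro i j
    rw [hzeroent2 i j, Complex.norm_real, Real.norm_eq_abs, abs_of_nonneg (by rw [hTA]; exact hT0 i j)]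

end Main

end
end

section
/- Let A be a real n×n Metzler matrix (all off-diagonal entries nonnegative) that is Hurwitz, let i, j be indices, let κ ≥ 0, and set J := A + κ eᵢ eⱼᵀ (where eᵢ, eⱼ are standard basis vectors, so J differs from A only in the (i, j) entry, increased by κ). If κ · (−A⁻¹)_{j,i} < 1, then J is Hurwitz: every complex eigenvalue of J has strictly negative real part. -/
open Matrix Polynomial

noncomputable section

namespace MHaux

open scoped ENNReal NNReal

variable {n : ℕ}

lemma eval_charpoly {R : Type*} [CommRing R] (M : Matrix (Fin n) (Fin n) R) (t : R) :
    M.charpoly.eval t = (t • (1 : Matrix (Fin n) (Fin n) R) - M).det := by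
  rw [Matrix.charpoly, ← Polynomial.coe_evalRingHom, RingHom.map_det]
  congr 1
  ext a b
  by_cases h : a = b <;>
    simp [Matrix.charmatrix_apply, Matrix.map_apply, Matrix.one_apply, Matrix.diagonal_apply,
      h, smul_eq_mul, Matrix.sub_apply]

lemma pow_entry_nonneg (B : Matrix (Fin n) (Fin n) ℝ) (hB : ∀ a b, 0 ≤ B a b) (k : ℕ)
    (a b : Fin n) : 0 ≤ (B ^ k) a b := by
  induction k generalizing a b with
  | zero => simp [Matrix.one_apply]; positivity
  | succ k ih =>
      rw [pow_succ, Matrix.mul_apply]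
      exact Finset.sum_nonneg fun c _ => mul_nonneg (ih a c) (hB c b)

lemma map_pow_ofReal (B : Matrix (Fin n) (Fin n) ℝ) (k : ℕ) :
    (B.map Complex.ofReal) ^ k = (B ^ k).map Complex.ofReal := by
  have : ∀ M : Matrix (Fin n) (Fin n) ℝ, M.map Complex.ofReal =
      (Complex.ofRealHom.mapMatrix : Matrix (Fin n) (Fin n) ℝ →+* Matrix (Fin n) (Fin n) ℂ) M :=
    fun M => rfl
  rw [this, this, ← map_pow]

section Normed

attribute [local instance] Matrix.linftyOpNormedAddCommGroup Matrix.linftyOpNormedRing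
  Matrix.linftyOpNormedAlgebra

lemma mem_spectrum_iff_det (M : Matrix (Fin n) (Fin n) ℂ) (z : ℂ) :
    z ∈ spectrum ℂ M ↔ (z • (1 : Matrix (Fin n) (Fin n) ℂ) - M).det = 0 := by
  rw [spectrum.mem_iff, Algebra.algebraMap_eq_smul_one, Matrix.isUnit_iff_isUnit_det,
    isUnit_iff_ne_zero, not_not]

lemma mem_spectrum_smul_iff (w : ℂ) (hw : w ≠ 0) (M : Matrix (Fin n) (Fin n) ℂ) (z : ℂ) :
    z ∈ spectrum ℂ (w⁻¹ • M) ↔ ((w * z) • (1 : Matrix (Fin n) (Fin n) ℂ) - M).det = 0 := by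
  rw [mem_spectrum_iff_det]
  have : (w * z) • (1 : Matrix (Fin n) (Fin n) ℂ) - M = w • (z • 1 - w⁻¹ • M) := by
    rw [smul_sub, smul_smul, smul_smul, mul_inv_cancel₀ hw, one_smul]
  rw [this, Matrix.det_smul, mul_eq_zero, or_iff_right (pow_ne_zero _ hw)]

lemma hasSum_pow_inverse {A : Type*} [NormedRing A] [NormedAlgebra ℂ A] [CompleteSpace A]
    (a : A) (h : spectralRadius ℂ a < 1) :
    HasSum (fun k : ℕ => a ^ k) (Ring.inverse (1 - a)) ∧ IsUnit (1 - a) := by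
  have h1 : (1 : ℝ≥0∞) < (spectralRadius ℂ a)⁻¹ := by
    rw [ENNReal.lt_inv_iff_lt_inv]
    simpa using h
  obtain ⟨r, hr1, hr2⟩ := ENNReal.lt_iff_exists_nnreal_btwn.mp h1
  have hr0 : 0 < (r : ℝ≥0∞) := lt_trans one_pos hr1
  have hball := (spectrum.hasFPowerSeriesOnBall_inverse_one_sub_smul ℂ a).exchange_radius
    ((spectrum.differentiableOn_inverse_one_sub_smul hr2).hasFPowerSeriesOnBall
      (by exact_mod_cast hr0))
  have hmem : (1 : ℂ) ∈ Metric.eball (0 : ℂ) r := by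
    rw [EMetric.mem_ball, edist_zero_right]
    simpa using hr1
  have hs := hball.hasSum hmem
  simp only [ContinuousMultilinearMap.mkPiRing_apply, Finset.prod_const, one_pow, one_smul,
    zero_add] at hs
  refine ⟨hs, ?_⟩
  have hu := spectrum.isUnit_one_sub_smul_of_lt_inv_radius (a := a) (z := (1 : ℂ))
    (by simpa using h1)
  rwa [one_smul] at hu

lemma specRadius_lt_one {A : Type*} [NormedRing A] [NormedAlgebra ℂ A] [CompleteSpace A]
    [Nontrivial A] (a : A) (h : ∀ z ∈ spectrum ℂ a, ‖z‖ < 1) : spectralRadius ℂ a < 1 := by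
  obtain ⟨z, hz, hz'⟩ := spectrum.exists_nnnorm_eq_spectralRadius (a := a)
  rw [← hz']
  exact_mod_cast h z hz

lemma entry_hasSum {f : ℕ → Matrix (Fin n) (Fin n) ℂ} {S : Matrix (Fin n) (Fin n) ℂ}
    (h : HasSum f S) (a b : Fin n) : HasSum (fun k => f k a b) (S a b) := by
  classical
  let L : Matrix (Fin n) (Fin n) ℂ →ₗ[ℂ] ℂ :=
    { toFun := fun M => M a b,
      map_add' := fun _ _ => rfl, map_smul' := fun _ _ => rfl }
  have h2 := (LinearMap.toContinuousLinearMap L).hasSum h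
  exact h2

lemma resolvent_facts [Nonempty (Fin n)] (B : Matrix (Fin n) (Fin n) ℝ)
    (hB : ∀ a b, 0 ≤ B a b) (s : ℝ) (hs : 0 < s)
    (hspec : ∀ z : ℂ, (z • (1 : Matrix (Fin n) (Fin n) ℂ) - B.map Complex.ofReal).det = 0 →
      ‖z‖ < s)
    (w : ℂ) (hw : s ≤ ‖w‖) :
    ∃ N : Matrix (Fin n) (Fin n) ℂ,
      (w • (1 : Matrix (Fin n) (Fin n) ℂ) - B.map Complex.ofReal) * N = 1 ∧
      (∀ a b, N a b = w⁻¹ * ∑' k : ℕ, (w⁻¹) ^ k * (((B ^ k) a b : ℝ) : ℂ)) ∧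
      (∀ a b, Summable (fun k : ℕ => s⁻¹ ^ k * ((B ^ k) a b))) ∧
      (∀ a b, ‖N a b‖ ≤ s⁻¹ * ∑' k : ℕ, s⁻¹ ^ k * ((B ^ k) a b)) := by
  classical
  set Bc := B.map Complex.ofReal with hBc
  have hw0 : w ≠ 0 := by
    intro h; rw [h, norm_zero] at hw; exact absurd (lt_of_lt_of_le hs hw) (lt_irrefl _)
  have hwpos : 0 < ‖w‖ := lt_of_lt_of_le hs hw
  have hsr : spectralRadius ℂ (w⁻¹ • Bc) < 1 := by
    apply specRadius_lt_one
    intro z hz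
    rw [mem_spectrum_smul_iff w hw0] at hz
    have := hspec _ hz
    rw [norm_mul] at this
    have h2 : ‖w‖ * ‖z‖ < ‖w‖ * 1 := by
      rw [mul_one]; exact lt_of_lt_of_le this hw
    exact lt_of_mul_lt_mul_left h2 (le_of_lt hwpos)
  obtain ⟨hsum, hunit⟩ := hasSum_pow_inverse (w⁻¹ • Bc) hsr
  set R := Ring.inverse (1 - w⁻¹ • Bc) with hR
  have hsrs : spectralRadius ℂ (((s : ℂ))⁻¹ • Bc) < 1 := by
    apply specRadius_lt_one
    intro z hz
    rw [mem_spectrum_smul_iff _ (by exact_mod_cast ne_of_gt hs)] at hz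
    have := hspec _ hz
    rw [norm_mul, Complex.norm_real, Real.norm_of_nonneg hs.le] at this
    have h2 : s * ‖z‖ < s * 1 := by rw [mul_one]; exact this
    exact lt_of_mul_lt_mul_left h2 hs.le
  obtain ⟨hsum', _⟩ := hasSum_pow_inverse (((s : ℂ))⁻¹ • Bc) hsrs
  have hterm : ∀ (a b : Fin n) (k : ℕ),
      ((w⁻¹ • Bc) ^ k) a b = (w⁻¹) ^ k * (((B ^ k) a b : ℝ) : ℂ) := by
    intro a b k
    rw [_root_.smul_pow, hBc, map_pow_ofReal, Matrix.smul_apply, Matrix.map_apply, smul_eq_mul]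
  have hterm' : ∀ (a b : Fin n) (k : ℕ), ((((s : ℂ))⁻¹ • Bc) ^ k) a b
      = (((s⁻¹ ^ k * ((B ^ k) a b) : ℝ)) : ℂ) := by
    intro a b k
    rw [_root_.smul_pow, hBc, map_pow_ofReal, Matrix.smul_apply, Matrix.map_apply, smul_eq_mul]
    push_cast
    ring
  have hsummable : ∀ a b, Summable (fun k : ℕ => s⁻¹ ^ k * ((B ^ k) a b)) := by
    intro a b
    have hab := entry_hasSum hsum' a b
    simp only [hterm'] at hab
    have := Complex.reCLM.hasSum hab
    simp only [Complex.reCLM_apply, Complex.ofReal_re] at this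
    exact this.summable
  refine ⟨w⁻¹ • R, ?_, ?_, hsummable, ?_⟩
  · have h1 : w • (1 - w⁻¹ • Bc) = w • (1 : Matrix (Fin n) (Fin n) ℂ) - Bc := by
      rw [smul_sub, smul_smul, mul_inv_cancel₀ hw0, one_smul]
    rw [← h1, Matrix.smul_mul, Matrix.mul_smul, smul_smul, mul_inv_cancel₀ hw0, one_smul,
      Ring.mul_inverse_cancel _ hunit]
  · intro a b
    have hab := entry_hasSum hsum a b
    simp only [hterm] at hab
    rw [Matrix.smul_apply, smul_eq_mul, hab.tsum_eq]
  · intro a b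
    have hab := entry_hasSum hsum a b
    simp only [hterm] at hab
    have hBk : ∀ k : ℕ, (0 : ℝ) ≤ (B ^ k) a b := fun k => pow_entry_nonneg B hB k a b
    have hle : ∀ k : ℕ, ‖(w⁻¹) ^ k * (((B ^ k) a b : ℝ) : ℂ)‖ ≤ s⁻¹ ^ k * ((B ^ k) a b) := by
      intro k
      rw [norm_mul, norm_pow, norm_inv, Complex.norm_real, Real.norm_of_nonneg (hBk k)]
      exact mul_le_mul_of_nonneg_right
        (pow_le_pow_left₀ (by positivity) (inv_anti₀ hs hw) k) (hBk k)
    have hnormsummable : Summable (fun k : ℕ => ‖(w⁻¹) ^ k * (((B ^ k) a b : ℝ) : ℂ)‖) :=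
      Summable.of_nonneg_of_le (fun k => norm_nonneg _) hle (hsummable a b)
    calc ‖(w⁻¹ • R) a b‖ = ‖w‖⁻¹ * ‖R a b‖ := by
          rw [Matrix.smul_apply, smul_eq_mul, norm_mul, norm_inv]
      _ ≤ s⁻¹ * ∑' k : ℕ, s⁻¹ ^ k * ((B ^ k) a b) := by
          apply mul_le_mul (inv_anti₀ hs hw) ?_ (norm_nonneg _) (by positivity)
          calc ‖R a b‖ = ‖∑' k : ℕ, (w⁻¹) ^ k * (((B ^ k) a b : ℝ) : ℂ)‖ := by rw [hab.tsum_eq]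
            _ ≤ ∑' k : ℕ, ‖(w⁻¹) ^ k * (((B ^ k) a b : ℝ) : ℂ)‖ :=
                norm_tsum_le_tsum_norm hnormsummable
            _ ≤ ∑' k : ℕ, s⁻¹ ^ k * ((B ^ k) a b) :=
                Summable.tsum_le_tsum hle hnormsummable (hsummable a b)

end Normed

end MHaux

/-- Single-edge rank-one feedback on a Metzler Hurwitz matrix: if
`κ (-A⁻¹)_{j,i} < 1`, then `J = A + κ eᵢ eⱼᵀ` (which increases the `(i,j)` entry of
`A` by `κ`) is Hurwitz. -/
theorem metzler_hurwitz_single_edge_feedback (n : ℕ) (A : Matrix (Fin n) (Fin n) ℝ)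
    (hMetzler : ∀ i j, i ≠ j → 0 ≤ A i j) (hHur : A.IsHurwitz)
    (i j : Fin n) (κ : ℝ) (hκ : 0 ≤ κ)
    (hgain : κ * (-(A⁻¹)) j i < 1) :
    (A + Matrix.single i j κ).IsHurwitz := by
  classical
  rcases Nat.eq_zero_or_pos n with hn | hn
  · subst hn
    intro μ hμ
    exfalso
    have h1 : ((A + Matrix.single i j κ).map Complex.ofReal).charpoly = 1 := by
      rw [Matrix.charpoly, Matrix.det_isEmpty]
    rw [Matrix.IsEigenvalueR, h1] at hμ
    simp at hμ
  haveI : Nonempty (Fin n) := Fin.pos_iff_nonempty.mp hn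
  set Ac := A.map Complex.ofReal with hAc
  -- spectral condition in determinant form
  have hdspec : ∀ z : ℂ, (z • (1 : Matrix (Fin n) (Fin n) ℂ) - Ac).det = 0 → z.re < 0 := by
    intro z hz
    apply hHur
    rw [Matrix.IsEigenvalueR, Polynomial.IsRoot, MHaux.eval_charpoly]
    exact hz
  -- A has nonzero determinant
  have hdetAc : ∀ z : ℂ, z.re = 0 → (z • (1 : Matrix (Fin n) (Fin n) ℂ) - Ac).det ≠ 0 :=
    fun z hz h => absurd (hdspec z h) (by rw [hz]; exact lt_irrefl 0)
  have hdetA : A.det ≠ 0 := by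
    intro h0
    have hAcdet : Ac.det = 0 := by
      have : (Complex.ofRealHom A.det : ℂ) = Ac.det := RingHom.map_det Complex.ofRealHom A
      rw [h0] at this
      simpa using this.symm
    apply hdetAc 0 rfl
    rw [zero_smul, zero_sub, Matrix.det_neg, hAcdet, mul_zero]
  -- finiteness of the "spectrum" (det-root set)
  have hfin : {z : ℂ | (z • (1 : Matrix (Fin n) (Fin n) ℂ) - Ac).det = 0}.Finite := by
    apply Set.Finite.subset (Ac.charpoly.roots.toFinset : Finset ℂ).finite_toSet
    intro z hz
    rw [Finset.mem_coe, Multiset.mem_toFinset,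
      Polynomial.mem_roots (Ac.charpoly_monic.ne_zero)]
    rw [Polynomial.IsRoot, MHaux.eval_charpoly]
    exact hz
  -- choice of the shift s
  obtain ⟨M0, hM0⟩ := (hfin.image (fun z => ‖z‖ ^ 2 / (2 * (-z.re)))).bddAbove
  obtain ⟨D0, hD0⟩ := (Set.finite_range (fun a : Fin n => -A a a)).bddAbove
  set s : ℝ := max (max M0 D0) 0 + 1 with hsdef
  have hs : 0 < s := by
    have := le_max_right (max M0 D0) (0 : ℝ)
    simp only [hsdef]
    linarith
  have hM0s : M0 < s := by
    have h1 := le_max_left M0 D0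
    have h2 := le_max_left (max M0 D0) (0 : ℝ)
    simp only [hsdef]; linarith
  have hD0s : D0 < s := by
    have h1 := le_max_right M0 D0
    have h2 := le_max_left (max M0 D0) (0 : ℝ)
    simp only [hsdef]; linarith
  set B := A + s • (1 : Matrix (Fin n) (Fin n) ℝ) with hBdef
  have hBnn : ∀ a b, 0 ≤ B a b := by
    intro a b
    by_cases hab : a = b
    · subst hab
      have h1 : -A a a ≤ D0 := hD0 (Set.mem_range_self a)
      simp only [hBdef, Matrix.add_apply, Matrix.smul_apply, Matrix.one_apply_eq, smul_eq_mul,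
        mul_one]
      linarith
    · simp only [hBdef, Matrix.add_apply, Matrix.smul_apply, Matrix.one_apply_ne hab,
        smul_eq_mul, mul_zero, add_zero]
      exact hMetzler a b hab
  have hBc : B.map Complex.ofReal = Ac + (s : ℂ) • 1 := by
    ext a b
    by_cases hab : a = b <;>
      simp [hBdef, hAc, Matrix.map_apply, Matrix.add_apply, Matrix.smul_apply,
        Matrix.one_apply, hab]
  -- spectral bound for B
  have hspecB : ∀ z : ℂ, (z • (1 : Matrix (Fin n) (Fin n) ℂ) - B.map Complex.ofReal).det = 0 →
      ‖z‖ < s := by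
    intro z hz
    have hshift : z • (1 : Matrix (Fin n) (Fin n) ℂ) - B.map Complex.ofReal
        = (z - (s : ℂ)) • 1 - Ac := by
      rw [hBc, sub_smul]; abel
    rw [hshift] at hz
    set y := z - (s : ℂ) with hy
    have hyre : y.re < 0 := hdspec y hz
    have hyM : ‖y‖ ^ 2 / (2 * (-y.re)) ≤ M0 :=
      hM0 (Set.mem_image_of_mem _ hz)
    have hlt : ‖y‖ ^ 2 < s * (2 * (-y.re)) := by
      rw [div_le_iff₀ (by linarith)] at hyM
      nlinarith
    have hzy : z = y + (s : ℂ) := by rw [hy]; ring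
    have hzre : z.re = y.re + s := by rw [hzy]; simp
    have hzim : z.im = y.im := by rw [hzy]; simp
    have hz2 : ‖z‖ ^ 2 = z.re ^ 2 + z.im ^ 2 := by
      rw [Complex.sq_norm, Complex.normSq_apply]; ring
    have hy2 : ‖y‖ ^ 2 = y.re ^ 2 + y.im ^ 2 := by
      rw [Complex.sq_norm, Complex.normSq_apply]; ring
    have hexp : ‖z‖ ^ 2 = ‖y‖ ^ 2 + 2 * s * y.re + s ^ 2 := by
      rw [hz2, hzre, hzim, hy2]; ring
    have hsq : ‖z‖ ^ 2 < s ^ 2 := by rw [hexp]; nlinarith [hlt]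
    exact lt_of_pow_lt_pow_left₀ 2 hs.le hsq
  -- main argument
  intro μ hμ
  by_contra hre
  push_neg at hre
  set w : ℂ := μ + (s : ℂ) with hwdef
  have hwre : s ≤ w.re := by
    rw [hwdef]; simp; linarith
  have hw : s ≤ ‖w‖ := le_trans hwre (Complex.re_le_norm w)
  obtain ⟨N, hN1, hN2, hN3, hN4⟩ := MHaux.resolvent_facts B hBnn s hs hspecB w hw
  obtain ⟨N', hN'1, hN'2, _, _⟩ := MHaux.resolvent_facts B hBnn s hs hspecB (s : ℂ)
    (by rw [Complex.norm_real, Real.norm_of_nonneg hs.le])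
  have hMw : w • (1 : Matrix (Fin n) (Fin n) ℂ) - B.map Complex.ofReal
      = μ • 1 - Ac := by rw [hBc, hwdef, add_smul]; abel
  have hMs : (s : ℂ) • (1 : Matrix (Fin n) (Fin n) ℂ) - B.map Complex.ofReal = -Ac := by
    rw [hBc]; abel
  rw [hMw] at hN1
  rw [hMs] at hN'1
  -- identify N' with the complexification of -(A⁻¹)
  have hAinv : A * A⁻¹ = 1 := Matrix.mul_nonsing_inv A (isUnit_iff_ne_zero.mpr hdetA)
  have hmapinv : (-Ac) * ((-(A⁻¹)).map Complex.ofReal) = 1 := by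
    have hmm : ∀ M : Matrix (Fin n) (Fin n) ℝ, M.map Complex.ofReal =
        (Complex.ofRealHom.mapMatrix :
          Matrix (Fin n) (Fin n) ℝ →+* Matrix (Fin n) (Fin n) ℂ) M := fun M => rfl
    have h1 : (-A) * (-(A⁻¹)) = 1 := by rw [neg_mul_neg, hAinv]
    have h2 : -Ac = (-A).map Complex.ofReal := by
      rw [hAc]; ext a b; simp [Matrix.map_apply]
    rw [h2, hmm, hmm, ← _root_.map_mul, h1, _root_.map_one]
  have hN'eq : (-(A⁻¹)).map Complex.ofReal = N' := by
    rw [← Matrix.inv_eq_right_inv hmapinv, ← Matrix.inv_eq_right_inv hN'1]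
  have hval : (-(A⁻¹)) j i = s⁻¹ * ∑' k : ℕ, s⁻¹ ^ k * ((B ^ k) j i) := by
    have h1 : ((-(A⁻¹)) j i : ℂ) = N' j i := by
      have := congrArg (fun M => M j i) hN'eq
      simpa [Matrix.map_apply] using this
    rw [hN'2 j i] at h1
    have h2 : ((s⁻¹ * ∑' k : ℕ, s⁻¹ ^ k * ((B ^ k) j i) : ℝ) : ℂ)
        = ((s : ℂ))⁻¹ * ∑' k : ℕ, ((s : ℂ))⁻¹ ^ k * (((B ^ k) j i : ℝ) : ℂ) := by
      rw [Complex.ofReal_mul, Complex.ofReal_tsum]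
      push_cast
      rfl
    rw [← h2] at h1
    exact_mod_cast h1
  -- determinant computation
  have hdetJ : (μ • (1 : Matrix (Fin n) (Fin n) ℂ)
      - (A + Matrix.single i j κ).map Complex.ofReal).det = 0 := by
    rw [← MHaux.eval_charpoly]
    exact hμ
  have hmapJ : (A + Matrix.single i j κ).map Complex.ofReal
      = Ac + Matrix.single i j (κ : ℂ) := by
    ext a b
    simp [hAc, Matrix.map_apply, Matrix.add_apply, Matrix.single, apply_ite Complex.ofReal]
  set P := Matrix.single i j (κ : ℂ) with hPdef
  set Mmat := μ • (1 : Matrix (Fin n) (Fin n) ℂ) - Ac with hMdef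
  have hfact : μ • (1 : Matrix (Fin n) (Fin n) ℂ) - (Ac + P) = Mmat * (1 - N * P) := by
    rw [Matrix.mul_sub, mul_one, ← Matrix.mul_assoc, hN1, Matrix.one_mul, hMdef]
    abel
  have hP : P = Matrix.replicateCol Unit (Pi.single i (κ : ℂ))
      * Matrix.replicateRow Unit (Pi.single j (1 : ℂ)) := by
    rw [← Matrix.vecMulVec_eq]
    ext a b
    simp only [Matrix.vecMulVec_apply, hPdef, Matrix.single, Matrix.of_apply,
      Pi.single_apply]
    by_cases h1 : i = a <;> by_cases h2 : j = b <;> simp [h1, h2, eq_comm]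
  have hdet1 : (1 - N * P).det = 1 - N j i * κ := by
    have hx : N * P = Matrix.replicateCol Unit (N *ᵥ Pi.single i (κ : ℂ))
        * Matrix.replicateRow Unit (Pi.single j (1 : ℂ)) := by
      rw [hP, ← Matrix.mul_assoc, Matrix.replicateCol_mulVec]
    have hcolneg : Matrix.replicateCol Unit (-(N *ᵥ Pi.single i (κ : ℂ)))
        = -(Matrix.replicateCol Unit (N *ᵥ Pi.single i (κ : ℂ))) := by
      ext a b; simp
    rw [hx, sub_eq_add_neg, ← Matrix.neg_mul, ← hcolneg,
      Matrix.det_one_add_replicateCol_mul_replicateRow]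
    simp [dotProduct_neg, single_dotProduct, Matrix.mulVec_single,
      sub_eq_add_neg]
    ring
  rw [hmapJ, hfact, Matrix.det_mul, hdet1, mul_eq_zero] at hdetJ
  have hMdet : Mmat.det ≠ 0 := Matrix.det_ne_zero_of_right_inverse hN1
  have hkey : N j i * (κ : ℂ) = 1 := by
    rcases hdetJ with h | h
    · exact absurd h hMdet
    · linear_combination -h
  -- norm estimate gives the contradiction
  have hnorm : (1 : ℝ) = ‖N j i‖ * κ := by
    have := congrArg norm hkey
    rwa [norm_mul, Complex.norm_real, Real.norm_of_nonneg hκ, norm_one, eq_comm] at this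
  have hbound : ‖N j i‖ ≤ (-(A⁻¹)) j i := by
    rw [hval]
    exact hN4 j i
  have hfinal : (1 : ℝ) ≤ κ * (-(A⁻¹)) j i := by
    rw [hnorm, mul_comm]
    exact mul_le_mul_of_nonneg_left hbound hκ
  linarith

end
end

section
/- Consider the 7-dimensional ω = 0 OSN system with strictly positive parameters Λ, μ, μ_n, β, β_w, β₁, β₂, γ₁, γ₂, μ₁, μ₂, α₁, α₂, ε₁, ε₂. The point OSND := (Λ/μ, 0, 0, 0, 0, 0, 0) is an equilibrium of the system, and the Jacobian of the vector field at OSND is Hurwitz (all complex eigenvalues have strictly negative real part) if and only if R₀ := βΛ/(μ μ_n) < 1; moreover, if R₀ > 1 the Jacobian at OSND has an eigenvalue with strictly positive real part. -/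
open Matrix Polynomial

set_option maxHeartbeats 1600000
noncomputable section

/-- The ω = 0 OSN rumor-spreading vector field on ℝ^7, in coordinates
`(x₁, U, W, S₁, B₁, S₂, B₂)` (indices 0,…,6). -/
def osnField (Λ μ μn β βw β₁ β₂ γ₁ γ₂ μ₁ μ₂ α₁ α₂ ε₁ ε₂ : ℝ)
    (p : Fin 7 → ℝ) : Fin 7 → ℝ :=
  ![Λ - μ * p 0 - β * p 0 * p 1,
    p 1 * (β * p 0 - μn - βw * p 2),
    βw * p 1 * p 2 - μ * p 2,
    β₁ * p 4 * p 1 / (ε₁ * p 4 + α₁ * p 1 + 1) - γ₁ * p 3,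
    γ₁ * p 3 - μ₁ * p 4,
    β₂ * p 6 * p 1 / (ε₂ * p 6 + α₂ * p 1 + 1) - γ₂ * p 5,
    γ₂ * p 5 - μ₂ * p 6]

/-- The Jacobian matrix of a vector field on ℝ^7, entry `(i, j)` being
`∂f_i/∂x_j` computed via the Fréchet derivative. -/
def jacobian7 (f : (Fin 7 → ℝ) → Fin 7 → ℝ) (x : Fin 7 → ℝ) :
    Matrix (Fin 7) (Fin 7) ℝ :=
  fun i j => fderiv ℝ (fun p => f p i) x (Pi.single j 1)

@[simp] lemma vc1 {α : Type*} (a : α) (u : Fin 6 → α) : Matrix.vecCons a u 1 = u 0 := rfl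
@[simp] lemma vc2 {α : Type*} (a : α) (u : Fin 6 → α) : Matrix.vecCons a u 2 = u 1 := rfl
@[simp] lemma vc3 {α : Type*} (a : α) (u : Fin 6 → α) : Matrix.vecCons a u 3 = u 2 := rfl
@[simp] lemma vc4 {α : Type*} (a : α) (u : Fin 6 → α) : Matrix.vecCons a u 4 = u 3 := rfl
@[simp] lemma vc5 {α : Type*} (a : α) (u : Fin 6 → α) : Matrix.vecCons a u 5 = u 4 := rfl
@[simp] lemma vc6 {α : Type*} (a : α) (u : Fin 6 → α) : Matrix.vecCons a u 6 = u 5 := rfl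
@[simp] lemma vd1 {α : Type*} (a : α) (u : Fin 5 → α) : Matrix.vecCons a u 1 = u 0 := rfl
@[simp] lemma vd2 {α : Type*} (a : α) (u : Fin 5 → α) : Matrix.vecCons a u 2 = u 1 := rfl
@[simp] lemma vd3 {α : Type*} (a : α) (u : Fin 5 → α) : Matrix.vecCons a u 3 = u 2 := rfl
@[simp] lemma vd4 {α : Type*} (a : α) (u : Fin 5 → α) : Matrix.vecCons a u 4 = u 3 := rfl
@[simp] lemma vd5 {α : Type*} (a : α) (u : Fin 5 → α) : Matrix.vecCons a u 5 = u 4 := rfl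

/-- Projection as a continuous linear map. -/
abbrev osnPr (k : Fin 7) : (Fin 7 → ℝ) →L[ℝ] ℝ := ContinuousLinearMap.proj k

/-- The Jacobian of the OSN field at the OSND point. -/
lemma osn_jac (Λ μ μn β βw β₁ β₂ γ₁ γ₂ μ₁ μ₂ α₁ α₂ ε₁ ε₂ : ℝ) :
    jacobian7 (osnField Λ μ μn β βw β₁ β₂ γ₁ γ₂ μ₁ μ₂ α₁ α₂ ε₁ ε₂)
      ![Λ / μ, 0, 0, 0, 0, 0, 0] =
    Matrix.of ![![-μ, -(β * (Λ / μ)), 0, 0, 0, 0, 0],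
      ![0, β * (Λ / μ) - μn, 0, 0, 0, 0, 0],
      ![0, 0, -μ, 0, 0, 0, 0],
      ![0, 0, 0, -γ₁, 0, 0, 0],
      ![0, 0, 0, γ₁, -μ₁, 0, 0],
      ![0, 0, 0, 0, 0, -γ₂, 0],
      ![0, 0, 0, 0, 0, γ₂, -μ₂]] := by
  set x : Fin 7 → ℝ := ![Λ / μ, 0, 0, 0, 0, 0, 0] with hxdef
  have hx0 : x 0 = Λ / μ := rfl
  have hx1 : x 1 = 0 := rfl
  have hx2 : x 2 = 0 := rfl
  have hx3 : x 3 = 0 := rfl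
  have hx4 : x 4 = 0 := rfl
  have hx5 : x 5 = 0 := rfl
  have hx6 : x 6 = 0 := rfl
  have h0 := hasFDerivAt_apply (𝕜 := ℝ) (0 : Fin 7) x
  have h1 := hasFDerivAt_apply (𝕜 := ℝ) (1 : Fin 7) x
  have h2 := hasFDerivAt_apply (𝕜 := ℝ) (2 : Fin 7) x
  have h3 := hasFDerivAt_apply (𝕜 := ℝ) (3 : Fin 7) x
  have h4 := hasFDerivAt_apply (𝕜 := ℝ) (4 : Fin 7) x
  have h5 := hasFDerivAt_apply (𝕜 := ℝ) (5 : Fin 7) x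
  have h6 := hasFDerivAt_apply (𝕜 := ℝ) (6 : Fin 7) x
  funext i j
  show fderiv ℝ (fun p => osnField Λ μ μn β βw β₁ β₂ γ₁ γ₂ μ₁ μ₂ α₁ α₂ ε₁ ε₂ p i)
      x (Pi.single j 1) = _
  fin_cases i
  · -- component 0
    have hF : HasFDerivAt (fun p : Fin 7 → ℝ => Λ - μ * p 0 - β * p 0 * p 1)
        ((0 - μ • osnPr 0) - ((β * x 0) • osnPr 1 + x 1 • (β • osnPr 0))) x :=
      ((hasFDerivAt_const Λ x).sub (h0.const_mul μ)).sub ((h0.const_mul β).mul h1)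
    show (fderiv ℝ (fun p : Fin 7 → ℝ => Λ - μ * p 0 - β * p 0 * p 1) x) (Pi.single j 1) = _
    rw [hF.fderiv]
    fin_cases j <;>
      simp [hx0, hx1, Pi.single_apply, Matrix.cons_val_zero, Matrix.cons_val_one, Matrix.cons_val_succ, Matrix.vecHead, Matrix.vecTail]
  · -- component 1
    have hF : HasFDerivAt (fun p : Fin 7 → ℝ => p 1 * (β * p 0 - μn - βw * p 2))
        (x 1 • (((β • osnPr 0) - 0) - βw • osnPr 2)
          + (β * x 0 - μn - βw * x 2) • osnPr 1) x :=
      h1.mul (((h0.const_mul β).sub (hasFDerivAt_const μn x)).sub (h2.const_mul βw))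
    show (fderiv ℝ (fun p : Fin 7 → ℝ => p 1 * (β * p 0 - μn - βw * p 2)) x) (Pi.single j 1) = _
    rw [hF.fderiv]
    fin_cases j <;>
      simp [hx0, hx1, hx2, Pi.single_apply, Matrix.cons_val_zero, Matrix.cons_val_one, Matrix.cons_val_succ, Matrix.vecHead, Matrix.vecTail]
  · -- component 2
    have hF : HasFDerivAt (fun p : Fin 7 → ℝ => βw * p 1 * p 2 - μ * p 2)
        (((βw * x 1) • osnPr 2 + x 2 • (βw • osnPr 1)) - μ • osnPr 2) x :=
      ((h1.const_mul βw).mul h2).sub (h2.const_mul μ)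
    show (fderiv ℝ (fun p : Fin 7 → ℝ => βw * p 1 * p 2 - μ * p 2) x) (Pi.single j 1) = _
    rw [hF.fderiv]
    fin_cases j <;>
      simp [hx1, hx2, Pi.single_apply, Matrix.cons_val_zero, Matrix.cons_val_one, Matrix.cons_val_succ, Matrix.vecHead, Matrix.vecTail]
  · -- component 3
    have hden : HasFDerivAt (fun p : Fin 7 → ℝ => ε₁ * p 4 + α₁ * p 1 + 1)
        ((ε₁ • osnPr 4 + α₁ • osnPr 1)) x :=
      ((h4.const_mul ε₁).add (h1.const_mul α₁)).add_const 1
    have hdx : (fun p : Fin 7 → ℝ => ε₁ * p 4 + α₁ * p 1 + 1) x ≠ 0 := by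
      simp [hx1, hx4]
    have hinv : HasFDerivAt (fun p : Fin 7 → ℝ => (ε₁ * p 4 + α₁ * p 1 + 1)⁻¹)
        (fderiv ℝ (fun p : Fin 7 → ℝ => (ε₁ * p 4 + α₁ * p 1 + 1)⁻¹) x) x :=
      (hden.differentiableAt.inv hdx).hasFDerivAt
    have hnum : HasFDerivAt (fun p : Fin 7 → ℝ => β₁ * p 4 * p 1)
        ((β₁ * x 4) • osnPr 1 + x 1 • (β₁ • osnPr 4)) x := (h4.const_mul β₁).mul h1
    have hF : HasFDerivAt
        (fun p : Fin 7 → ℝ => β₁ * p 4 * p 1 * (ε₁ * p 4 + α₁ * p 1 + 1)⁻¹ - γ₁ * p 3)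
        (((β₁ * x 4 * x 1) • fderiv ℝ (fun p : Fin 7 → ℝ => (ε₁ * p 4 + α₁ * p 1 + 1)⁻¹) x
           + (ε₁ * x 4 + α₁ * x 1 + 1)⁻¹ • ((β₁ * x 4) • osnPr 1 + x 1 • (β₁ • osnPr 4)))
          - γ₁ • osnPr 3) x :=
      (hnum.mul hinv).sub (h3.const_mul γ₁)
    show (fderiv ℝ (fun p : Fin 7 → ℝ =>
        β₁ * p 4 * p 1 / (ε₁ * p 4 + α₁ * p 1 + 1) - γ₁ * p 3) x) (Pi.single j 1) = _
    simp only [div_eq_mul_inv]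
    rw [hF.fderiv]
    fin_cases j <;>
      simp [hx1, hx4, Pi.single_apply, Matrix.cons_val_zero, Matrix.cons_val_one, Matrix.cons_val_succ, Matrix.vecHead, Matrix.vecTail]
  · -- component 4
    have hF : HasFDerivAt (fun p : Fin 7 → ℝ => γ₁ * p 3 - μ₁ * p 4)
        (γ₁ • osnPr 3 - μ₁ • osnPr 4) x := (h3.const_mul γ₁).sub (h4.const_mul μ₁)
    show (fderiv ℝ (fun p : Fin 7 → ℝ => γ₁ * p 3 - μ₁ * p 4) x) (Pi.single j 1) = _
    rw [hF.fderiv]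
    fin_cases j <;> simp [Pi.single_apply, Matrix.cons_val_zero, Matrix.cons_val_one, Matrix.cons_val_succ, Matrix.vecHead, Matrix.vecTail]
  · -- component 5
    have hden : HasFDerivAt (fun p : Fin 7 → ℝ => ε₂ * p 6 + α₂ * p 1 + 1)
        ((ε₂ • osnPr 6 + α₂ • osnPr 1)) x :=
      ((h6.const_mul ε₂).add (h1.const_mul α₂)).add_const 1
    have hdx : (fun p : Fin 7 → ℝ => ε₂ * p 6 + α₂ * p 1 + 1) x ≠ 0 := by
      simp [hx1, hx6]
    have hinv : HasFDerivAt (fun p : Fin 7 → ℝ => (ε₂ * p 6 + α₂ * p 1 + 1)⁻¹)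
        (fderiv ℝ (fun p : Fin 7 → ℝ => (ε₂ * p 6 + α₂ * p 1 + 1)⁻¹) x) x :=
      (hden.differentiableAt.inv hdx).hasFDerivAt
    have hnum : HasFDerivAt (fun p : Fin 7 → ℝ => β₂ * p 6 * p 1)
        ((β₂ * x 6) • osnPr 1 + x 1 • (β₂ • osnPr 6)) x := (h6.const_mul β₂).mul h1
    have hF : HasFDerivAt
        (fun p : Fin 7 → ℝ => β₂ * p 6 * p 1 * (ε₂ * p 6 + α₂ * p 1 + 1)⁻¹ - γ₂ * p 5)
        (((β₂ * x 6 * x 1) • fderiv ℝ (fun p : Fin 7 → ℝ => (ε₂ * p 6 + α₂ * p 1 + 1)⁻¹) x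
           + (ε₂ * x 6 + α₂ * x 1 + 1)⁻¹ • ((β₂ * x 6) • osnPr 1 + x 1 • (β₂ • osnPr 6)))
          - γ₂ • osnPr 5) x :=
      (hnum.mul hinv).sub (h5.const_mul γ₂)
    show (fderiv ℝ (fun p : Fin 7 → ℝ =>
        β₂ * p 6 * p 1 / (ε₂ * p 6 + α₂ * p 1 + 1) - γ₂ * p 5) x) (Pi.single j 1) = _
    simp only [div_eq_mul_inv]
    rw [hF.fderiv]
    fin_cases j <;>
      simp [hx1, hx6, Pi.single_apply, Matrix.cons_val_zero, Matrix.cons_val_one, Matrix.cons_val_succ, Matrix.vecHead, Matrix.vecTail]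
  · -- component 6
    have hF : HasFDerivAt (fun p : Fin 7 → ℝ => γ₂ * p 5 - μ₂ * p 6)
        (γ₂ • osnPr 5 - μ₂ • osnPr 6) x := (h5.const_mul γ₂).sub (h6.const_mul μ₂)
    show (fderiv ℝ (fun p : Fin 7 → ℝ => γ₂ * p 5 - μ₂ * p 6) x) (Pi.single j 1) = _
    rw [hF.fderiv]
    fin_cases j <;> simp [Pi.single_apply, Matrix.cons_val_zero, Matrix.cons_val_one, Matrix.cons_val_succ, Matrix.vecHead, Matrix.vecTail]

/-- Characteristic polynomial of the shape of matrix arising as the OSND Jacobian. -/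
lemma osn_charpoly (a0 a1 a2 a3 a4 a5 a6 b c d : ℂ) :
    (Matrix.of ![![a0, b, 0, 0, 0, 0, 0],
      ![0, a1, 0, 0, 0, 0, 0],
      ![0, 0, a2, 0, 0, 0, 0],
      ![0, 0, 0, a3, 0, 0, 0],
      ![0, 0, 0, c, a4, 0, 0],
      ![0, 0, 0, 0, 0, a5, 0],
      ![0, 0, 0, 0, 0, d, a6]]).charpoly =
    (X - C a0) * (X - C a1) * (X - C a2) * (X - C a3) * (X - C a4)
      * (X - C a5) * (X - C a6) := by
  rw [Matrix.charpoly, ← Matrix.det_submatrix_equiv_self (Equiv.swap 0 1)]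
  have htri : ((charmatrix (Matrix.of ![![a0, b, 0, 0, 0, 0, 0],
      ![0, a1, 0, 0, 0, 0, 0],
      ![0, 0, a2, 0, 0, 0, 0],
      ![0, 0, 0, a3, 0, 0, 0],
      ![0, 0, 0, c, a4, 0, 0],
      ![0, 0, 0, 0, 0, a5, 0],
      ![0, 0, 0, 0, 0, d, a6]])).submatrix (Equiv.swap 0 1)
        (Equiv.swap 0 1)).BlockTriangular OrderDual.toDual := by
    intro i j hij
    fin_cases i <;> fin_cases j <;>
      first
        | exact absurd hij (by decide)
        | simp [Matrix.submatrix_apply, Equiv.swap_apply_def, charmatrix_apply_ne]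
  rw [Matrix.det_of_lowerTriangular _ htri, Fin.prod_univ_seven]
  simp only [Matrix.submatrix_apply,
    show Equiv.swap (0:Fin 7) 1 0 = 1 from by decide,
    show Equiv.swap (0:Fin 7) 1 1 = 0 from by decide,
    show Equiv.swap (0:Fin 7) 1 2 = 2 from by decide,
    show Equiv.swap (0:Fin 7) 1 3 = 3 from by decide,
    show Equiv.swap (0:Fin 7) 1 4 = 4 from by decide,
    show Equiv.swap (0:Fin 7) 1 5 = 5 from by decide,
    show Equiv.swap (0:Fin 7) 1 6 = 6 from by decide,
    charmatrix_apply_eq]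
  show (X - C a1) * (X - C a0) * (X - C a2) * (X - C a3) * (X - C a4) * (X - C a5)
      * (X - C a6) = _
  ring

/-- The OSN-disappearance point `OSND = (Λ/μ, 0, 0, 0, 0, 0, 0)` is an equilibrium of
the ω = 0 OSN system; its Jacobian is Hurwitz iff `R₀ := βΛ/(μ μn) < 1`, and if
`R₀ > 1` the Jacobian has an eigenvalue with strictly positive real part. -/
theorem osn_OSND_stability
    (Λ μ μn β βw β₁ β₂ γ₁ γ₂ μ₁ μ₂ α₁ α₂ ε₁ ε₂ : ℝ)
    (hΛ : 0 < Λ) (hμ : 0 < μ) (hμn : 0 < μn) (hβ : 0 < β) (hβw : 0 < βw)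
    (hβ₁ : 0 < β₁) (hβ₂ : 0 < β₂) (hγ₁ : 0 < γ₁) (hγ₂ : 0 < γ₂)
    (hμ₁ : 0 < μ₁) (hμ₂ : 0 < μ₂) (hα₁ : 0 < α₁) (hα₂ : 0 < α₂)
    (hε₁ : 0 < ε₁) (hε₂ : 0 < ε₂) :
    (∀ i, osnField Λ μ μn β βw β₁ β₂ γ₁ γ₂ μ₁ μ₂ α₁ α₂ ε₁ ε₂
        ![Λ / μ, 0, 0, 0, 0, 0, 0] i = 0) ∧
    ((jacobian7 (osnField Λ μ μn β βw β₁ β₂ γ₁ γ₂ μ₁ μ₂ α₁ α₂ ε₁ ε₂)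
        ![Λ / μ, 0, 0, 0, 0, 0, 0]).IsHurwitz ↔ β * Λ / (μ * μn) < 1) ∧
    (1 < β * Λ / (μ * μn) →
      ∃ lam : ℂ,
        (jacobian7 (osnField Λ μ μn β βw β₁ β₂ γ₁ γ₂ μ₁ μ₂ α₁ α₂ ε₁ ε₂)
          ![Λ / μ, 0, 0, 0, 0, 0, 0]).IsEigenvalueR lam ∧ 0 < lam.re) := by
  have hμ' : μ ≠ 0 := ne_of_gt hμ
  -- eigenvalue characterization
  have hmap : ((jacobian7 (osnField Λ μ μn β βw β₁ β₂ γ₁ γ₂ μ₁ μ₂ α₁ α₂ ε₁ ε₂)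
      ![Λ / μ, 0, 0, 0, 0, 0, 0]).map Complex.ofReal) =
      Matrix.of ![![(-μ : ℂ), (-(β * (Λ / μ)) : ℝ), 0, 0, 0, 0, 0],
        ![0, ((β * (Λ / μ) - μn : ℝ) : ℂ), 0, 0, 0, 0, 0],
        ![0, 0, (-μ : ℂ), 0, 0, 0, 0],
        ![0, 0, 0, (-γ₁ : ℂ), 0, 0, 0],
        ![0, 0, 0, (γ₁ : ℂ), (-μ₁ : ℂ), 0, 0],
        ![0, 0, 0, 0, 0, (-γ₂ : ℂ), 0],
        ![0, 0, 0, 0, 0, (γ₂ : ℂ), (-μ₂ : ℂ)]] := by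
    rw [osn_jac]
    funext i j
    fin_cases i <;> fin_cases j <;>
      simp [Matrix.map_apply, Matrix.vecHead, Matrix.vecTail]
  have hev : ∀ lam : ℂ,
      (jacobian7 (osnField Λ μ μn β βw β₁ β₂ γ₁ γ₂ μ₁ μ₂ α₁ α₂ ε₁ ε₂)
        ![Λ / μ, 0, 0, 0, 0, 0, 0]).IsEigenvalueR lam ↔
      (lam = (-μ : ℂ) ∨ lam = ((β * (Λ / μ) - μn : ℝ) : ℂ) ∨ lam = (-γ₁ : ℂ)
        ∨ lam = (-μ₁ : ℂ) ∨ lam = (-γ₂ : ℂ) ∨ lam = (-μ₂ : ℂ)) := by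
    intro lam
    rw [Matrix.IsEigenvalueR, hmap, osn_charpoly]
    simp only [IsRoot, eval_mul, eval_sub, eval_X, eval_C, mul_eq_zero, sub_eq_zero]
    push_cast
    constructor
    · rintro ((((((h | h) | h) | h) | h) | h) | h) <;> tauto
    · rintro (h | h | h | h | h | h) <;> tauto
  have key : (β * (Λ / μ) - μn < 0) ↔ β * Λ / (μ * μn) < 1 := by
    rw [div_lt_one (by positivity), sub_neg]
    rw [mul_div_assoc'] at *
    constructor
    · intro h; rw [div_lt_iff₀ hμ] at h; nlinarith
    · intro h; rw [div_lt_iff₀ hμ]; nlinarith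
  refine ⟨?_, ?_, ?_⟩
  · intro i
    fin_cases i <;> simp [osnField] <;> field_simp <;> ring
  · constructor
    · intro hH
      have := hH ((β * (Λ / μ) - μn : ℝ) : ℂ) (by rw [hev]; tauto)
      rw [← key]
      simpa using this
    · intro hR lam hlam
      rw [hev] at hlam
      have h1 : β * (Λ / μ) - μn < 0 := key.mpr hR
      rcases hlam with h | h | h | h | h | h <;> subst h <;> simp <;> linarith
  · intro hR
    refine ⟨((β * (Λ / μ) - μn : ℝ) : ℂ), by rw [hev]; tauto, ?_⟩
    have h1 : 0 < β * (Λ / μ) - μn := by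
      rw [lt_div_iff₀ (by positivity : (0:ℝ) < μ * μn)] at hR
      have h3 : μn < β * (Λ / μ) := by
        rw [mul_div_assoc', lt_div_iff₀ hμ]; nlinarith
      linarith
    simpa using h1

end
end

section
/- Consider the 7-dimensional ω = 0 OSN system with strictly positive parameters, and set x̃₁ := Λβ_w/(μ(β + β_w)), Ũ := μ/β_w, W̃ := (β x̃₁ − μ_n)/β_w. Then the point RFE := (x̃₁, Ũ, W̃, 0, 0, 0, 0) is an equilibrium of the system, and W̃ > 0 if and only if R₀ := βΛ/(μ μ_n) > 1 + β/β_w. -/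
/-!
On the face `S₁ = B₁ = S₂ = B₂ = 0` the last four components of the field vanish, and the first
three are solved by taking `Ũ = μ/βw` (so that `W' = W (βw U − μ) = 0`), `W̃` from `U' = 0`, and
`x̃₁` from the balance `Λ = x̃₁ (μ + β Ũ)`. The sign of `W̃` is that of `βx̃₁ − μn`, and clearing
the positive denominators turns `μn < βx̃₁` into the threshold `1 + β/βw < R₀`.
-/

open Matrix Polynomial

noncomputable section

theorem osnField_eq_zero_of_rumorFree
    {Λ μ μn β βw β₁ β₂ γ₁ γ₂ μ₁ μ₂ α₁ α₂ ε₁ ε₂ : ℝ} {p : Fin 7 → ℝ}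
    (hS₁ : p 3 = 0) (hB₁ : p 4 = 0) (hS₂ : p 5 = 0) (hB₂ : p 6 = 0)
    (hx : Λ = μ * p 0 + β * p 0 * p 1) (hU : βw * p 1 = μ) (hW : βw * p 2 = β * p 0 - μn) :
    ∀ i, osnField Λ μ μn β βw β₁ β₂ γ₁ γ₂ μ₁ μ₂ α₁ α₂ ε₁ ε₂ p i = 0 := by
  intro i
  fin_cases i <;> simp only [osnField, Fin.isValue, Fin.zero_eta, Fin.mk_one, Fin.reduceFinMk,
    cons_val_zero, cons_val_one, cons_val, hS₁, hB₁, hS₂, hB₂, mul_zero, zero_mul, zero_add,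
    zero_div, sub_self]
  · linear_combination hx
  · linear_combination (-p 1) * hW
  · linear_combination p 2 * hU

theorem rfe_balance {Λ μ β βw : ℝ} (hμ : μ ≠ 0) (hβw : βw ≠ 0) (hββw : β + βw ≠ 0) :
    Λ = μ * (Λ * βw / (μ * (β + βw))) + β * (Λ * βw / (μ * (β + βw))) * (μ / βw) := by
  field_simp
  ring

theorem lt_mul_rfe_iff {Λ μ μn β βw : ℝ} (hμ : 0 < μ) (hμn : 0 < μn) (hβw : 0 < βw)
    (hββw : 0 < β + βw) :
    μn < β * (Λ * βw / (μ * (β + βw))) ↔ 1 + β / βw < β * Λ / (μ * μn) := by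
  rw [mul_div_assoc', lt_div_iff₀ (by positivity), one_add_div hβw.ne',
    div_lt_div_iff₀ hβw (by positivity)]
  constructor <;> intro h <;> linarith

theorem osn_RFE_equilibrium_general
    (Λ μ μn β βw β₁ β₂ γ₁ γ₂ μ₁ μ₂ α₁ α₂ ε₁ ε₂ : ℝ)
    (hμ : 0 < μ) (hμn : 0 < μn) (hβ : 0 < β) (hβw : 0 < βw) :
    (∀ i, osnField Λ μ μn β βw β₁ β₂ γ₁ γ₂ μ₁ μ₂ α₁ α₂ ε₁ ε₂
        ![Λ * βw / (μ * (β + βw)), μ / βw,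
          (β * (Λ * βw / (μ * (β + βw))) - μn) / βw, 0, 0, 0, 0] i = 0) ∧
    (0 < (β * (Λ * βw / (μ * (β + βw))) - μn) / βw ↔
      1 + β / βw < β * Λ / (μ * μn)) := by
  have hββw : 0 < β + βw := add_pos hβ hβw
  refine ⟨osnField_eq_zero_of_rumorFree rfl rfl rfl rfl
    (rfe_balance hμ.ne' hβw.ne' hββw.ne') (mul_div_cancel₀ _ hβw.ne')
    (mul_div_cancel₀ _ hβw.ne'), ?_⟩
  rw [div_pos_iff_of_pos_right hβw, sub_pos]
  exact lt_mul_rfe_iff hμ hμn hβw hββw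

/-- The rumor-free point `RFE = (x̃₁, Ũ, W̃, 0, 0, 0, 0)` with
`x̃₁ = Λβw/(μ(β+βw))`, `Ũ = μ/βw`, `W̃ = (βx̃₁ − μn)/βw` is an equilibrium of the
ω = 0 OSN system, and `W̃ > 0` iff `R₀ := βΛ/(μ μn) > 1 + β/βw`. -/
theorem osn_RFE_equilibrium
    (Λ μ μn β βw β₁ β₂ γ₁ γ₂ μ₁ μ₂ α₁ α₂ ε₁ ε₂ : ℝ)
    (hΛ : 0 < Λ) (hμ : 0 < μ) (hμn : 0 < μn) (hβ : 0 < β) (hβw : 0 < βw)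
    (hβ₁ : 0 < β₁) (hβ₂ : 0 < β₂) (hγ₁ : 0 < γ₁) (hγ₂ : 0 < γ₂)
    (hμ₁ : 0 < μ₁) (hμ₂ : 0 < μ₂) (hα₁ : 0 < α₁) (hα₂ : 0 < α₂)
    (hε₁ : 0 < ε₁) (hε₂ : 0 < ε₂) :
    (∀ i, osnField Λ μ μn β βw β₁ β₂ γ₁ γ₂ μ₁ μ₂ α₁ α₂ ε₁ ε₂
        ![Λ * βw / (μ * (β + βw)), μ / βw,
          (β * (Λ * βw / (μ * (β + βw))) - μn) / βw, 0, 0, 0, 0] i = 0) ∧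
    (0 < (β * (Λ * βw / (μ * (β + βw))) - μn) / βw ↔
      1 + β / βw < β * Λ / (μ * μn)) :=
  osn_RFE_equilibrium_general Λ μ μn β βw β₁ β₂ γ₁ γ₂ μ₁ μ₂ α₁ α₂ ε₁ ε₂ hμ hμn hβ hβw

end
end

section
/- Consider the 7-dimensional ω = 0 OSN system with strictly positive parameters, with x̂₁ := μ_n/β and Û := Λ/μ_n − μ/β, and suppose R₀ := βΛ/(μ μ_n) > 1 and R₁(Û) := β₁Û/(μ₁(1 + α₁Û)) > 1. Set D := β₁Û − μ₁(1 + α₁Û) (which is positive), Ŝ₁ := D/(γ₁ε₁) and B̂₁ := D/(ε₁μ₁). Then the point E₁g := (x̂₁, Û, 0, Ŝ₁, B̂₁, 0, 0) lies in the nonnegative orthant with Ŝ₁ > 0 and B̂₁ > 0, and it is an equilibrium of the system: all seven components of the vector field vanish at E₁g. Moreover D > 0 holds if and only if R₁(Û) > 1. -/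
open Matrix Polynomial

noncomputable section

/-- Existence of the single-strain endemic equilibrium `E₁g` of the ω = 0 OSN system
on the gOSN branch: with `x̂₁ = μn/β`, `Û = Λ/μn − μ/β`, `D = β₁Û − μ₁(1 + α₁Û)`,
`Ŝ₁ = D/(γ₁ε₁)`, `B̂₁ = D/(ε₁μ₁)`, and assuming `R₀ > 1` and `R₁(Û) > 1`, one has
`D > 0 ↔ R₁(Û) > 1`, `Ŝ₁ > 0`, `B̂₁ > 0`, and
`E₁g = (x̂₁, Û, 0, Ŝ₁, B̂₁, 0, 0)` is an equilibrium of the system. -/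
theorem osn_E1g_equilibrium
    (Λ μ μn β βw β₁ β₂ γ₁ γ₂ μ₁ μ₂ α₁ α₂ ε₁ ε₂ : ℝ)
    (hΛ : 0 < Λ) (hμ : 0 < μ) (hμn : 0 < μn) (hβ : 0 < β) (hβw : 0 < βw)
    (hβ₁ : 0 < β₁) (hβ₂ : 0 < β₂) (hγ₁ : 0 < γ₁) (hγ₂ : 0 < γ₂)
    (hμ₁ : 0 < μ₁) (hμ₂ : 0 < μ₂) (hα₁ : 0 < α₁) (hα₂ : 0 < α₂)
    (hε₁ : 0 < ε₁) (hε₂ : 0 < ε₂)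
    (hR₀ : 1 < β * Λ / (μ * μn))
    (hR₁ : 1 < β₁ * (Λ / μn - μ / β) /
      (μ₁ * (1 + α₁ * (Λ / μn - μ / β)))) :
    (0 < β₁ * (Λ / μn - μ / β) - μ₁ * (1 + α₁ * (Λ / μn - μ / β)) ↔
      1 < β₁ * (Λ / μn - μ / β) / (μ₁ * (1 + α₁ * (Λ / μn - μ / β)))) ∧
    (0 < (β₁ * (Λ / μn - μ / β) - μ₁ * (1 + α₁ * (Λ / μn - μ / β))) / (γ₁ * ε₁)) ∧
    (0 < (β₁ * (Λ / μn - μ / β) - μ₁ * (1 + α₁ * (Λ / μn - μ / β))) / (ε₁ * μ₁)) ∧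
    (∀ i, osnField Λ μ μn β βw β₁ β₂ γ₁ γ₂ μ₁ μ₂ α₁ α₂ ε₁ ε₂
        ![μn / β, Λ / μn - μ / β, 0,
          (β₁ * (Λ / μn - μ / β) - μ₁ * (1 + α₁ * (Λ / μn - μ / β))) / (γ₁ * ε₁),
          (β₁ * (Λ / μn - μ / β) - μ₁ * (1 + α₁ * (Λ / μn - μ / β))) / (ε₁ * μ₁),
          0, 0] i = 0) := by
  have hU : 0 < Λ / μn - μ / β := by
    rw [lt_div_iff₀ (by positivity)] at hR₀
    rw [sub_pos, div_lt_div_iff₀ hβ hμn]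
    nlinarith
  set U : ℝ := Λ / μn - μ / β with hUdef
  have hden : 0 < μ₁ * (1 + α₁ * U) := by positivity
  have hiff : 0 < β₁ * U - μ₁ * (1 + α₁ * U) ↔
      1 < β₁ * U / (μ₁ * (1 + α₁ * U)) := by
    rw [lt_div_iff₀ hden, sub_pos, one_mul]
  have hD : 0 < β₁ * U - μ₁ * (1 + α₁ * U) := hiff.mpr hR₁
  set D : ℝ := β₁ * U - μ₁ * (1 + α₁ * U) with hDdef
  refine ⟨hiff, by positivity, by positivity, ?_⟩
  intro i
  have hβ' := hβ.ne'
  have hμn' := hμn.ne'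
  have hμ₁' := hμ₁.ne'
  have hε₁' := hε₁.ne'
  have hγ₁' := hγ₁.ne'
  have hβ₁' := hβ₁.ne'
  have hU' := hU.ne'
  have hd3 : ε₁ * (D / (ε₁ * μ₁)) + α₁ * U + 1 = β₁ * U / μ₁ := by
    rw [hDdef]; field_simp; ring
  set S : ℝ := D / (γ₁ * ε₁) with hSdef
  set B : ℝ := D / (ε₁ * μ₁) with hBdef
  fin_cases i
  · show Λ - μ * (μn / β) - β * (μn / β) * U = 0
    rw [hUdef]; field_simp; ring
  · show U * (β * (μn / β) - μn - βw * 0) = 0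
    field_simp
    ring
  · show βw * U * 0 - μ * 0 = 0
    ring
  · show β₁ * B * U / (ε₁ * B + α₁ * U + 1) - γ₁ * S = 0
    rw [hBdef, hd3, hSdef, sub_eq_zero]
    field_simp
  · show γ₁ * S - μ₁ * B = 0
    rw [hSdef, hBdef, sub_eq_zero]
    field_simp
  · show β₂ * 0 * U / (ε₂ * 0 + α₂ * U + 1) - γ₂ * 0 = 0
    simp
  · show γ₂ * 0 - μ₂ * 0 = 0
    ring

end
end
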